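/- arXiv:2409.11126 — 12 statements merged into one kernel-verified Lean document; each statement's English description precedes it below -/
import Mathlib

section
/- Let I be an infinite set and P ⊆ I a finite subset. Then there is no linear order ≤ on I such that for every permutation π of I fixing each element of P and all x, y ∈ I one has x ≤ y if and only if π x ≤ π y. In particular, no linear order on I is finitely supported. -/
/-- In the basic Fraenkel model, no linear order on the infinite individual
domain `I` is invariant under all permutations fixing a finite set `P`
pointwise; in particular, no linear order on `I` is finitely supported. -/
theorem no_finitely_supported_linear_order {I : Type*} [Infinite I]
    (P : Set I) (hP : P.Finite) :
    ¬ ∃ r : I → I → Prop, IsLinearOrder I r ∧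
        ∀ π : Equiv.Perm I, (∀ p ∈ P, π p = p) →
          ∀ x y : I, (r x y ↔ r (π x) (π y)) := by
  rintro ⟨r, hlin, hinv⟩
  classical
  obtain ⟨a, ha, b, hb, hab'⟩ := (hP.infinite_compl).nontrivial
  have hfix : ∀ p ∈ P, Equiv.swap a b p = p := by
    intro p hp
    apply Equiv.swap_apply_of_ne_of_ne
    · exact fun h => ha (h ▸ hp)
    · exact fun h => hb (h ▸ hp)
  have h := hinv (Equiv.swap a b) hfix a b
  rw [Equiv.swap_apply_left, Equiv.swap_apply_right] at h
  rcases hlin.total a b with hr | hr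
  · exact hab' (hlin.antisymm a b hr (h.mp hr))
  · exact hab' (hlin.antisymm a b (h.mpr hr) hr)
end

section
/- Let I be an infinite set and P ⊆ I a finite subset. Then there is no well-order ≤ on I (a linear order in which every nonempty subset of I has a least element) such that for every permutation π of I fixing each element of P and all x, y ∈ I one has x ≤ y if and only if π x ≤ π y. In particular, no well-order on I is finitely supported. -/
/-- In the basic Fraenkel model, no well-order (a linear order in which every
nonempty subset has a least element) on the infinite individual domain `I` is
invariant under all permutations fixing a finite set `P` pointwise; in
particular, no well-order on `I` is finitely supported. -/
theorem no_finitely_supported_well_order {I : Type*} [Infinite I]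
    (P : Set I) (hP : P.Finite) :
    ¬ ∃ r : I → I → Prop,
        (IsLinearOrder I r ∧
          ∀ s : Set I, s.Nonempty → ∃ a ∈ s, ∀ b ∈ s, r a b) ∧
        ∀ π : Equiv.Perm I, (∀ p ∈ P, π p = p) →
          ∀ x y : I, (r x y ↔ r (π x) (π y)) := by
  classical
  rintro ⟨r, ⟨hlin, -⟩, hinv⟩
  obtain ⟨a, ha, b, hb, hab⟩ := hP.infinite_compl.nontrivial
  have hfix : ∀ p ∈ P, Equiv.swap a b p = p := by
    intro p hp
    exact Equiv.swap_apply_of_ne_of_ne (fun h => ha (h ▸ hp : a ∈ P)) (fun h => hb (h ▸ hp : b ∈ P))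
  have h := hinv (Equiv.swap a b) hfix a b
  rw [Equiv.swap_apply_left, Equiv.swap_apply_right] at h
  rcases hlin.total a b with hr | hr
  · exact hab (hlin.antisymm _ _ hr (h.mp hr))
  · exact hab (hlin.antisymm _ _ (h.mpr hr) hr)
end

section
/- Let I be an infinite set, n ≥ 1, and P ⊆ I a finite subset. Then there is no linear order ≤ on the set of n-tuples Fin n → I such that for every permutation π of I fixing each element of P and all tuples ξ, η : Fin n → I one has ξ ≤ η if and only if (π ∘ ξ) ≤ (π ∘ η). In particular, no linear order (hence no well-order) on Fin n → I is finitely supported with respect to the componentwise action of permutations of I. -/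
/-- In the basic Fraenkel model, no linear order on the set of `n`-tuples of an
infinite individual domain `I` is invariant under the componentwise action of
all permutations of `I` fixing a finite set `P` pointwise; in particular, no
linear order (hence no well-order) on `Fin n → I` is finitely supported. -/
theorem no_finitely_supported_linear_order_on_tuples {I : Type*} [Infinite I]
    (n : ℕ) (hn : 1 ≤ n) (P : Set I) (hP : P.Finite) :
    ¬ ∃ r : (Fin n → I) → (Fin n → I) → Prop, IsLinearOrder (Fin n → I) r ∧
        ∀ π : Equiv.Perm I, (∀ p ∈ P, π p = p) →
          ∀ ξ η : Fin n → I, (r ξ η ↔ r (⇑π ∘ ξ) (⇑π ∘ η)) := by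
  rintro ⟨r, hlin, hinv⟩
  classical
  have hPc : (Pᶜ : Set I).Infinite := hP.infinite_compl
  obtain ⟨a, ha, b, hb, hab⟩ := hPc.nontrivial
  set π : Equiv.Perm I := Equiv.swap a b with hπ
  have hfix : ∀ p ∈ P, π p = p := by
    intro p hp
    apply Equiv.swap_apply_of_ne_of_ne
    · rintro rfl; exact ha hp
    · rintro rfl; exact hb hp
  set ξ : Fin n → I := fun _ => a
  set η : Fin n → I := fun _ => b
  have hπξ : ⇑π ∘ ξ = η := by
    funext i; simp [ξ, η, π, Equiv.swap_apply_left]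
  have hπη : ⇑π ∘ η = ξ := by
    funext i; simp [ξ, η, π, Equiv.swap_apply_right]
  have hne : ξ ≠ η := by
    intro h
    exact hab (congrFun h ⟨0, hn⟩)
  have h1 := hinv π hfix ξ η
  have h2 := hinv π hfix η ξ
  rw [hπξ, hπη] at h1 h2
  rcases hlin.total ξ η with h | h
  · exact hne (hlin.antisymm _ _ h (h1.mp h))
  · exact hne (hlin.antisymm _ _ (h2.mp h) h)
end

section
/- Let I be an infinite set. (i) If s ⊆ I is invariant under every permutation of I fixing each element of a finite set P ⊆ I pointwise (i.e. π '' s = s for all such π), then s \ P = ∅ or s \ P = I \ P. (ii) Consequently, a subset s ⊆ I is finitely supported if and only if s is finite or the complement I \ s is finite. -/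
lemma invariant_dichotomy {I : Type*} (s P : Set I)
    (h : ∀ π : Equiv.Perm I, (∀ p ∈ P, π p = p) → ⇑π '' s = s) :
    s \ P = ∅ ∨ s \ P = Set.univ \ P := by
  classical
  by_cases hs : s \ P = ∅
  · exact Or.inl hs
  · right
    obtain ⟨a, ha, haP⟩ := Set.nonempty_iff_ne_empty.2 hs
    ext b
    simp only [Set.mem_diff, Set.mem_univ, true_and]
    refine ⟨fun hb => hb.2, fun hbP => ⟨?_, hbP⟩⟩
    by_contra hbs
    have hab : a ≠ b := fun h => hbs (h ▸ ha)
    have hfix : ∀ p ∈ P, Equiv.swap a b p = p := by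
      intro p hp
      apply Equiv.swap_apply_of_ne_of_ne
      · exact fun h => haP (h ▸ hp)
      · exact fun h => hbP (h ▸ hp)
    have := h (Equiv.swap a b) hfix
    have hb : Equiv.swap a b a ∈ (⇑(Equiv.swap a b)) '' s := ⟨a, ha, rfl⟩
    rw [this, Equiv.swap_apply_left] at hb
    exact hbs hb

/-- (i) A subset of an infinite set `I` invariant under all permutations fixing
a finite set `P` pointwise is, outside of `P`, either empty or everything.
(ii) A subset of `I` is finitely supported iff it is finite or cofinite. -/
theorem invariant_subsets_and_finitely_supported {I : Type*} [Infinite I] :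
    (∀ (s P : Set I), P.Finite →
      (∀ π : Equiv.Perm I, (∀ p ∈ P, π p = p) → ⇑π '' s = s) →
      s \ P = ∅ ∨ s \ P = Set.univ \ P) ∧
    (∀ s : Set I,
      (∃ P : Set I, P.Finite ∧
        ∀ π : Equiv.Perm I, (∀ p ∈ P, π p = p) → ⇑π '' s = s) ↔
      (s.Finite ∨ sᶜ.Finite)) := by
  constructor
  · intro s P _ h
    exact invariant_dichotomy s P h
  · intro s
    constructor
    · rintro ⟨P, hPfin, h⟩
      rcases invariant_dichotomy s P h with hd | hd
      · left
        have : s ⊆ P := fun x hx => by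
          by_contra hxP
          exact (Set.eq_empty_iff_forall_notMem.1 hd x) ⟨hx, hxP⟩
        exact hPfin.subset this
      · right
        have : sᶜ ⊆ P := fun x hx => by
          by_contra hxP
          have : x ∈ s \ P := hd ▸ ⟨Set.mem_univ x, hxP⟩
          exact hx this.1
        exact hPfin.subset this
    · intro h
      rcases h with hf | hf
      · refine ⟨s, hf, fun π hπ => ?_⟩
        ext x
        constructor
        · rintro ⟨y, hy, rfl⟩; rw [hπ y hy]; exact hy
        · intro hx; exact ⟨x, hx, hπ x hx⟩
      · refine ⟨sᶜ, hf, fun π hπ => ?_⟩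
        have hc : ⇑π '' sᶜ = sᶜ := by
          ext x
          constructor
          · rintro ⟨y, hy, rfl⟩; rw [hπ y hy]; exact hy
          · intro hx; exact ⟨x, hx, hπ x hx⟩
        have := congrArg (·ᶜ) hc
        simpa [Set.image_compl_eq π.bijective] using this
end

section
/- Let I be a set, P ⊆ I finite, and n ≥ 1. For e : Fin n → Option P let B_e = {ξ : Fin n → I | for all i, if e i = some p then ξ i = p, and if e i = none then ξ i ∉ P}, let idx_e = {i | e i = none}, and for each partition 𝒦 of idx_e let A_𝒦 = {ξ | for all i, j ∈ idx_e, ξ i = ξ j ↔ i, j lie in the same block of 𝒦}. Then the family of all sets α_{e,𝒦} = B_e ∩ A_𝒦, as e ranges over functions Fin n → Option P and 𝒦 over partitions of idx_e, is a finite family of pairwise disjoint sets whose union is all of Fin n → I, and each α_{e,𝒦} is invariant under the componentwise action of every permutation of I fixing each element of P. -/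
/-- `𝒦` is a partition of the set `idx`. -/
def IsPartitionOf {α : Type*} (𝒦 : Set (Set α)) (idx : Set α) : Prop :=
  (∀ K ∈ 𝒦, K.Nonempty) ∧ 𝒦.PairwiseDisjoint id ∧ ⋃₀ 𝒦 = idx

/-- The set `B_e` of tuples whose components follow the prescription `e`. -/
def Bblock {I : Type*} (P : Set I) {n : ℕ} (e : Fin n → Option P) :
    Set (Fin n → I) :=
  {ξ | ∀ i : Fin n, (∀ p : P, e i = some p → ξ i = (p : I)) ∧
    (e i = none → ξ i ∉ P)}

/-- The index set `idx_e = {i | e i = none}`. -/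
def idxOf {I : Type*} {P : Set I} {n : ℕ} (e : Fin n → Option P) :
    Set (Fin n) :=
  {i | e i = none}

/-- The set `A_𝒦` of tuples with equality pattern `𝒦` on `idx`. -/
def eqPatternBlock {I : Type*} {n : ℕ} (idx : Set (Fin n))
    (𝒦 : Set (Set (Fin n))) : Set (Fin n → I) :=
  {ξ | ∀ i ∈ idx, ∀ j ∈ idx, (ξ i = ξ j ↔ ∃ K ∈ 𝒦, i ∈ K ∧ j ∈ K)}

/-- The block `α_{e,𝒦} = B_e ∩ A_𝒦` of the `P`-and-`id` adequate partition. -/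
def PIdBlock {I : Type*} (P : Set I) {n : ℕ} (e : Fin n → Option P)
    (𝒦 : Set (Set (Fin n))) : Set (Fin n → I) :=
  Bblock P e ∩ eqPatternBlock (idxOf e) 𝒦

/-- Composing with a permutation fixing `P` preserves membership in a block. -/
lemma comp_mem_PIdBlock {I : Type*} {P : Set I} {n : ℕ} {e : Fin n → Option P}
    {𝒦 : Set (Set (Fin n))} (π : Equiv.Perm I) (hπ : ∀ p ∈ P, π p = p)
    {ξ : Fin n → I} (hξ : ξ ∈ PIdBlock P e 𝒦) : (⇑π ∘ ξ) ∈ PIdBlock P e 𝒦 := by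
  obtain ⟨hB, hA⟩ := hξ
  constructor
  · intro i
    obtain ⟨h1, h2⟩ := hB i
    refine ⟨fun p hp => ?_, fun hn hmem => ?_⟩
    · simp only [Function.comp_apply, h1 p hp]
      exact hπ p p.2
    · apply h2 hn
      have h3 : π (π (ξ i)) = π (ξ i) := hπ _ hmem
      have h4 : π (ξ i) = ξ i := π.injective h3
      simpa [Function.comp_apply, h4] using hmem
  · intro i hi j hj
    rw [← hA i hi j hj]
    exact ⟨fun h => π.injective h, fun h => by simp [Function.comp_apply, h]⟩

/-- A block of a partition is determined by the equality pattern of a tuple in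
`eqPatternBlock`. -/
lemma block_eq_of_pattern {I : Type*} {n : ℕ} {ξ : Fin n → I}
    {idx : Set (Fin n)} {𝒦 : Set (Set (Fin n))}
    (h𝒦 : IsPartitionOf 𝒦 idx) (hA : ξ ∈ eqPatternBlock idx 𝒦)
    {K : Set (Fin n)} {i : Fin n} (hK : K ∈ 𝒦) (hi : i ∈ K) :
    K = {j | j ∈ idx ∧ ξ i = ξ j} := by
  obtain ⟨hne, hdisj, hcup⟩ := h𝒦
  have hKidx : K ⊆ idx := hcup ▸ Set.subset_sUnion_of_mem hK
  have hiidx : i ∈ idx := hKidx hi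
  ext j
  constructor
  · intro hj
    exact ⟨hKidx hj, (hA i hiidx j (hKidx hj)).2 ⟨K, hK, hi, hj⟩⟩
  · rintro ⟨hjidx, hij⟩
    obtain ⟨K0, hK0, hi0, hj0⟩ := (hA i hiidx j hjidx).1 hij
    have hKK : K0 = K := by
      by_contra hne'
      exact (Set.disjoint_left.1 (hdisj hK0 hK hne') hi0) hi
    exact hKK ▸ hj0

lemma partition_subset_of_pattern {I : Type*} {n : ℕ} {ξ : Fin n → I}
    {idx : Set (Fin n)} {𝒦 𝒦' : Set (Set (Fin n))}
    (h𝒦 : IsPartitionOf 𝒦 idx) (h𝒦' : IsPartitionOf 𝒦' idx)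
    (hA : ξ ∈ eqPatternBlock idx 𝒦) (hA' : ξ ∈ eqPatternBlock idx 𝒦') :
    𝒦 ⊆ 𝒦' := by
  intro K hK
  obtain ⟨i, hi⟩ := h𝒦.1 K hK
  have hiidx : i ∈ idx := by
    have : K ⊆ idx := h𝒦.2.2 ▸ Set.subset_sUnion_of_mem hK
    exact this hi
  have hi' : i ∈ ⋃₀ 𝒦' := h𝒦'.2.2 ▸ hiidx
  obtain ⟨K', hK', hiK'⟩ := hi'
  have e1 := block_eq_of_pattern h𝒦 hA hK hi
  have e2 := block_eq_of_pattern h𝒦' hA' hK' hiK'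
  rw [e1, ← e2]
  exact hK'

/-- The `P`-and-`id` adequate partition of `Iⁿ`: the blocks `α_{e,𝒦} = B_e ∩ A_𝒦`
(for `e : Fin n → Option P` and `𝒦` a partition of `idx_e`) form a finite
family of pairwise disjoint sets covering `Fin n → I`, each of which is
invariant under the componentwise action of every permutation of `I` fixing
each element of `P`. -/
theorem P_and_id_adequate_partition {I : Type*} (P : Set I) (hP : P.Finite)
    (n : ℕ) (hn : 1 ≤ n) :
    ({q : (Fin n → Option P) × Set (Set (Fin n)) |
        IsPartitionOf q.2 (idxOf q.1)}).Finite ∧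
    (∀ q ∈ {q : (Fin n → Option P) × Set (Set (Fin n)) |
        IsPartitionOf q.2 (idxOf q.1)},
      ∀ q' ∈ {q : (Fin n → Option P) × Set (Set (Fin n)) |
        IsPartitionOf q.2 (idxOf q.1)},
      q ≠ q' → Disjoint (PIdBlock P q.1 q.2) (PIdBlock P q'.1 q'.2)) ∧
    (⋃ q ∈ {q : (Fin n → Option P) × Set (Set (Fin n)) |
        IsPartitionOf q.2 (idxOf q.1)}, PIdBlock P q.1 q.2) = Set.univ ∧
    (∀ q ∈ {q : (Fin n → Option P) × Set (Set (Fin n)) |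
        IsPartitionOf q.2 (idxOf q.1)},
      ∀ π : Equiv.Perm I, (∀ p ∈ P, π p = p) →
        (fun ξ => ⇑π ∘ ξ) '' PIdBlock P q.1 q.2 = PIdBlock P q.1 q.2) := by
  haveI := hP.to_subtype
  haveI := Fintype.ofFinite ↥P
  refine ⟨Set.toFinite _, ?_, ?_, ?_⟩
  · -- pairwise disjoint
    intro q hq q' hq' hne
    rw [Set.disjoint_left]
    intro ξ h1 h2
    apply hne
    -- first components agree
    have he : q.1 = q'.1 := by
      funext i
      obtain ⟨h1a, h1b⟩ := h1.1 i
      obtain ⟨h2a, h2b⟩ := h2.1 i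
      cases hqi : q.1 i with
      | none =>
        cases hq'i : q'.1 i with
        | none => rfl
        | some p =>
          have : ξ i ∈ P := by rw [h2a p hq'i]; exact p.2
          exact absurd this (h1b hqi)
      | some p =>
        cases hq'i : q'.1 i with
        | none =>
          have : ξ i ∈ P := by rw [h1a p hqi]; exact p.2
          exact absurd this (h2b hq'i)
        | some p' =>
          have : (p : I) = (p' : I) := by rw [← h1a p hqi, ← h2a p' hq'i]
          exact congrArg some (Subtype.ext this)
    have hidx : idxOf q.1 = idxOf q'.1 := by rw [he]
    have hA : ξ ∈ eqPatternBlock (idxOf q.1) q.2 := h1.2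
    have hA' : ξ ∈ eqPatternBlock (idxOf q.1) q'.2 := hidx ▸ h2.2
    have hq2 : IsPartitionOf q.2 (idxOf q.1) := hq
    have hq'2 : IsPartitionOf q'.2 (idxOf q.1) := hidx ▸ hq'
    have h𝒦 : q.2 = q'.2 :=
      Set.Subset.antisymm
        (partition_subset_of_pattern hq2 hq'2 hA hA')
        (partition_subset_of_pattern hq'2 hq2 hA' hA)
    exact Prod.ext he h𝒦
  · -- covering
    ext ξ
    simp only [Set.mem_iUnion, Set.mem_univ, iff_true, Set.mem_setOf_eq]
    classical
    set e : Fin n → Option P := fun i => if h : ξ i ∈ P then some ⟨ξ i, h⟩ else none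
      with he
    set 𝒦 : Set (Set (Fin n)) :=
      {K | ∃ i, ξ i ∉ P ∧ K = {j | ξ j ∉ P ∧ ξ j = ξ i}} with h𝒦
    have hidx : idxOf e = {i | ξ i ∉ P} := by
      ext i
      by_cases h : ξ i ∈ P <;> simp [idxOf, he, h]
    refine ⟨(e, 𝒦), ?_, ?_, ?_⟩
    · -- partition
      refine ⟨?_, ?_, ?_⟩
      · rintro K ⟨i, hi, rfl⟩
        exact ⟨i, hi, rfl⟩
      · rintro K ⟨i, hi, rfl⟩ K' ⟨i', hi', rfl⟩ hne
        rw [Function.onFun, Set.disjoint_left]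
        intro j hj hj'
        apply hne
        obtain ⟨hjP, hji⟩ := hj
        obtain ⟨_, hji'⟩ := hj'
        have : ξ i = ξ i' := by rw [← hji, hji']
        ext k
        simp only [Set.mem_setOf_eq, this]
      · rw [hidx]
        ext i
        constructor
        · rintro ⟨K, ⟨k, hk, rfl⟩, hiK⟩
          exact hiK.1
        · intro hi
          exact ⟨{j | ξ j ∉ P ∧ ξ j = ξ i}, ⟨i, hi, rfl⟩, hi, rfl⟩
    · -- ξ ∈ Bblock
      intro i
      constructor
      · intro p hp
        by_cases h : ξ i ∈ P
        · simp only [he, dif_pos h, Option.some.injEq] at hp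
          rw [← hp]
        · simp [he, dif_neg h] at hp
      · intro hni
        by_cases h : ξ i ∈ P
        · simp [he, dif_pos h] at hni
        · exact h
    · -- ξ ∈ eqPatternBlock
      rw [hidx]
      intro i hi j hj
      constructor
      · intro hij
        exact ⟨{k | ξ k ∉ P ∧ ξ k = ξ i}, ⟨i, hi, rfl⟩, ⟨hi, rfl⟩, ⟨hj, hij.symm⟩⟩
      · rintro ⟨K, ⟨k, hk, rfl⟩, ⟨_, hik⟩, ⟨_, hjk⟩⟩
        rw [hik, hjk]
  · -- invariance
    intro q hq π hπ
    have hπ' : ∀ p ∈ P, π.symm p = p := fun p hp =>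
      π.injective (by rw [Equiv.apply_symm_apply, hπ p hp])
    apply Set.Subset.antisymm
    · rintro η ⟨ξ, hξ, rfl⟩
      exact comp_mem_PIdBlock π hπ hξ
    · intro η hη
      refine ⟨⇑π.symm ∘ η, comp_mem_PIdBlock π.symm hπ' hη, ?_⟩
      funext x
      simp
end

section
/- Let I be a set, P ⊆ I finite, n ≥ 1, and let μ : Fin n → I \ P be injective. Then there exists a finite set T of tuples in Fin n → I such that: (i) T contains exactly one element of each block α_{e,𝒦} of the P-and-id adequate partition of Iⁿ (in particular every block is nonempty and T is a transversal of this partition); (ii) every component of every tuple in T lies in P ∪ range μ; and (iii) every permutation of I fixing each element of P ∪ range μ fixes every tuple in T componentwise, and hence maps T onto itself. -/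
section Aux

variable {I : Type*} {n : ℕ}

theorem block_unique {α : Type*} {𝒦 : Set (Set α)} (hd : 𝒦.PairwiseDisjoint id)
    {K L : Set α} (hK : K ∈ 𝒦) (hL : L ∈ 𝒦) {x : α} (hxK : x ∈ K) (hxL : x ∈ L) :
    K = L := by
  by_contra h
  exact Set.disjoint_left.mp (hd hK hL h) hxK hxL

theorem partition_ext {α : Type*} {𝒦 𝒦' : Set (Set α)} {idx : Set α}
    (h1 : IsPartitionOf 𝒦 idx) (h2 : IsPartitionOf 𝒦' idx)
    (h : ∀ i ∈ idx, ∀ j ∈ idx,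
      ((∃ K ∈ 𝒦, i ∈ K ∧ j ∈ K) ↔ ∃ K ∈ 𝒦', i ∈ K ∧ j ∈ K)) :
    𝒦 = 𝒦' := by
  have key : ∀ (𝒦₁ 𝒦₂ : Set (Set α)), IsPartitionOf 𝒦₁ idx → IsPartitionOf 𝒦₂ idx →
      (∀ i ∈ idx, ∀ j ∈ idx,
        ((∃ K ∈ 𝒦₁, i ∈ K ∧ j ∈ K) ↔ ∃ K ∈ 𝒦₂, i ∈ K ∧ j ∈ K)) →
      𝒦₁ ⊆ 𝒦₂ := by
    intro 𝒦₁ 𝒦₂ h1 h2 hiff K hK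
    obtain ⟨i, hi⟩ := h1.1 K hK
    have hidx : i ∈ idx := h1.2.2 ▸ ⟨K, hK, hi⟩
    obtain ⟨K', hK', hiK'⟩ : ∃ K' ∈ 𝒦₂, i ∈ K' := by
      have : i ∈ ⋃₀ 𝒦₂ := h2.2.2.symm ▸ hidx
      simpa using this
    suffices hKK : K = K' by rw [hKK]; exact hK'
    ext j
    constructor
    · intro hj
      have hjidx : j ∈ idx := h1.2.2 ▸ ⟨K, hK, hj⟩
      obtain ⟨L, hL, hiL, hjL⟩ := (hiff i hidx j hjidx).mp ⟨K, hK, hi, hj⟩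
      rwa [block_unique h2.2.1 hK' hL hiK' hiL]
    · intro hj
      have hjidx : j ∈ idx := h2.2.2 ▸ ⟨K', hK', hj⟩
      obtain ⟨L, hL, hiL, hjL⟩ := (hiff i hidx j hjidx).mpr ⟨K', hK', hiK', hj⟩
      rwa [block_unique h1.2.1 hK hL hi hiL]
  exact le_antisymm (key 𝒦 𝒦' h1 h2 h) (key 𝒦' 𝒦 h2 h1 (fun i hi j hj => (h i hi j hj).symm))

open Classical in
/-- A canonical element of a set of indices (with default `d`). -/
noncomputable def chElem (d : Fin n) (K : Set (Fin n)) : Fin n :=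
  if h : K.Nonempty then h.some else d

theorem chElem_mem (d : Fin n) {K : Set (Fin n)} (h : K.Nonempty) :
    chElem d K ∈ K := by
  rw [chElem, dif_pos h]
  exact h.some_mem

open Classical in
/-- The block of `𝒦` containing `i`, if any. -/
noncomputable def SOf (𝒦 : Set (Set (Fin n))) (i : Fin n) : Set (Fin n) :=
  if h : ∃ K ∈ 𝒦, i ∈ K then h.choose else ∅

theorem SOf_spec {𝒦 : Set (Set (Fin n))} {idx : Set (Fin n)}
    (h𝒦 : IsPartitionOf 𝒦 idx) {i : Fin n} (hi : i ∈ idx) :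
    SOf 𝒦 i ∈ 𝒦 ∧ i ∈ SOf 𝒦 i := by
  have hex : ∃ K ∈ 𝒦, i ∈ K := by
    have : i ∈ ⋃₀ 𝒦 := h𝒦.2.2.symm ▸ hi
    simpa using this
  rw [SOf, dif_pos hex]
  exact hex.choose_spec

theorem br_eq_iff {𝒦 : Set (Set (Fin n))} {idx : Set (Fin n)}
    (h𝒦 : IsPartitionOf 𝒦 idx) (d : Fin n) {i j : Fin n}
    (hi : i ∈ idx) (hj : j ∈ idx) :
    chElem d (SOf 𝒦 i) = chElem d (SOf 𝒦 j) ↔ ∃ K ∈ 𝒦, i ∈ K ∧ j ∈ K := by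
  obtain ⟨hSi𝒦, hiSi⟩ := SOf_spec h𝒦 hi
  obtain ⟨hSj𝒦, hjSj⟩ := SOf_spec h𝒦 hj
  have hci : chElem d (SOf 𝒦 i) ∈ SOf 𝒦 i := chElem_mem d ⟨i, hiSi⟩
  have hcj : chElem d (SOf 𝒦 j) ∈ SOf 𝒦 j := chElem_mem d ⟨j, hjSj⟩
  constructor
  · intro h
    have hSS : SOf 𝒦 i = SOf 𝒦 j :=
      block_unique h𝒦.2.1 hSi𝒦 hSj𝒦 hci (h ▸ hcj)
    exact ⟨SOf 𝒦 i, hSi𝒦, hiSi, hSS ▸ hjSj⟩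
  · rintro ⟨K, hK, hiK, hjK⟩
    have h1 : SOf 𝒦 i = K := block_unique h𝒦.2.1 hSi𝒦 hK hiSi hiK
    have h2 : SOf 𝒦 j = K := block_unique h𝒦.2.1 hSj𝒦 hK hjSj hjK
    rw [h1, h2]

/-- The canonical representative of the block `α_{e,𝒦}`. -/
noncomputable def repT {I : Type*} (P : Set I) {n : ℕ} (μ : Fin n → I) (d : Fin n)
    (e : Fin n → Option P) (𝒦 : Set (Set (Fin n))) : Fin n → I := fun i =>
  match e i with
  | some p => (p : I)
  | none => μ (chElem d (SOf 𝒦 i))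

theorem repT_mem_block {I : Type*} {P : Set I} {n : ℕ} {μ : Fin n → I}
    (hμinj : Function.Injective μ) (hμ : ∀ i, μ i ∉ P) (d : Fin n)
    {e : Fin n → Option P} {𝒦 : Set (Set (Fin n))}
    (h𝒦 : IsPartitionOf 𝒦 (idxOf e)) :
    repT P μ d e 𝒦 ∈ PIdBlock P e 𝒦 := by
  constructor
  · intro i
    constructor
    · intro p hp
      simp [repT, hp]
    · intro hp
      simp only [repT, hp]
      exact hμ _
  · intro i hi j hj
    have hie : e i = none := hi
    have hje : e j = none := hj
    simp only [repT, hie, hje]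
    rw [hμinj.eq_iff]
    exact br_eq_iff h𝒦 d hi hj

theorem block_eq_of_mem {I : Type*} {P : Set I} {n : ℕ}
    {e e' : Fin n → Option P} {𝒦 𝒦' : Set (Set (Fin n))}
    (h𝒦 : IsPartitionOf 𝒦 (idxOf e)) (h𝒦' : IsPartitionOf 𝒦' (idxOf e'))
    {ξ : Fin n → I} (h1 : ξ ∈ PIdBlock P e 𝒦) (h2 : ξ ∈ PIdBlock P e' 𝒦') :
    e = e' ∧ 𝒦 = 𝒦' := by
  have hee : e = e' := by
    funext i
    rcases hpi : e i with _ | p <;> rcases hpi' : e' i with _ | p'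
    · rfl
    · exfalso
      exact (h1.1 i).2 hpi (((h2.1 i).1 p' hpi') ▸ p'.2)
    · exfalso
      exact (h2.1 i).2 hpi' (((h1.1 i).1 p hpi) ▸ p.2)
    · have : (p : I) = (p' : I) := ((h1.1 i).1 p hpi).symm.trans ((h2.1 i).1 p' hpi')
      rw [Subtype.coe_injective this]
  subst hee
  refine ⟨rfl, partition_ext h𝒦 h𝒦' ?_⟩
  intro i hi j hj
  rw [← h1.2 i hi j hj, ← h2.2 i hi j hj]

end Aux

/-- A choice set for the `P`-and-`id` adequate partition of `Iⁿ`: given an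
injective `μ : Fin n → I \ P`, there is a finite transversal `T` containing
exactly one tuple from each block `α_{e,𝒦}`, all of whose components lie in
`P ∪ range μ`, so that every permutation of `I` fixing `P ∪ range μ` pointwise
fixes every tuple in `T` componentwise and hence maps `T` onto itself. -/
theorem choice_set_for_P_and_id_partition {I : Type*} (P : Set I)
    (hP : P.Finite) (n : ℕ) (hn : 1 ≤ n) (μ : Fin n → I)
    (hμinj : Function.Injective μ) (hμ : ∀ i, μ i ∉ P) :
    ∃ T : Set (Fin n → I), T.Finite ∧
      (∀ (e : Fin n → Option P) (𝒦 : Set (Set (Fin n))),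
        IsPartitionOf 𝒦 (idxOf e) →
        ∃! ξ : Fin n → I, ξ ∈ T ∧ ξ ∈ PIdBlock P e 𝒦) ∧
      (∀ ξ ∈ T, ∀ i : Fin n, ξ i ∈ P ∪ Set.range μ) ∧
      (∀ π : Equiv.Perm I, (∀ x ∈ P ∪ Set.range μ, π x = x) →
        (∀ ξ ∈ T, ⇑π ∘ ξ = ξ) ∧ (fun ξ => ⇑π ∘ ξ) '' T = T) := by
  classical
  set d : Fin n := ⟨0, hn⟩ with hd
  set T : Set (Fin n → I) :=
    {ξ | ∃ e 𝒦, IsPartitionOf 𝒦 (idxOf e) ∧ ξ = repT P μ d e 𝒦} with hT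
  have hTrange : ∀ ξ ∈ T, ∀ i : Fin n, ξ i ∈ P ∪ Set.range μ := by
    rintro ξ ⟨e, 𝒦, h𝒦, rfl⟩ i
    rcases hpi : e i with _ | p
    · right
      simp [repT, hpi]
    · left
      simp only [repT, hpi]; exact p.2
  refine ⟨T, ?_, ?_, hTrange, ?_⟩
  · have hfin : (Set.pi Set.univ (fun _ : Fin n => P ∪ Set.range μ)).Finite :=
      Set.Finite.pi (fun _ => hP.union (Set.finite_range μ))
    refine hfin.subset ?_
    intro ξ hξ
    simp only [Set.mem_pi, Set.mem_univ, forall_true_left]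
    exact fun i => hTrange ξ hξ i
  · intro e 𝒦 h𝒦
    refine ⟨repT P μ d e 𝒦, ⟨⟨e, 𝒦, h𝒦, rfl⟩, repT_mem_block hμinj hμ d h𝒦⟩, ?_⟩
    rintro ξ ⟨⟨e', 𝒦', h𝒦', rfl⟩, hmem⟩
    obtain ⟨he, h𝒦𝒦⟩ := block_eq_of_mem h𝒦' h𝒦 (repT_mem_block hμinj hμ d h𝒦') hmem
    rw [he, h𝒦𝒦]
  · intro π hπ
    have hfix : ∀ ξ ∈ T, ⇑π ∘ ξ = ξ := by
      intro ξ hξ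
      funext i
      exact hπ _ (hTrange ξ hξ i)
    refine ⟨hfix, ?_⟩
    ext ξ
    constructor
    · rintro ⟨ζ, hζ, rfl⟩
      show ⇑π ∘ ζ ∈ T
      rw [hfix ζ hζ]
      exact hζ
    · intro hξ
      exact ⟨ξ, hξ, hfix ξ hξ⟩
end

section
/- Let I be an infinite set, P ⊆ I finite, n ≥ 1, and ξ, ξ' : Fin n → I. The following are equivalent: (a) there exists a permutation π of I that fixes each element of P, moves only finitely many elements of I, and satisfies π (ξ' i) = ξ i for all i ∈ Fin n; (b) for all i ∈ Fin n, if ξ i ∈ P or ξ' i ∈ P then ξ i = ξ' i, and for all i, j ∈ Fin n, ξ i = ξ j if and only if ξ' i = ξ' j. -/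
theorem aux {I : Type*} (n : ℕ) (ξ ξ' : Fin n → I) (P : Set I)
    (hmem : ∀ i : Fin n, (ξ i ∈ P ∨ ξ' i ∈ P) → ξ i = ξ' i)
    (hpat : ∀ i j : Fin n, (ξ i = ξ j ↔ ξ' i = ξ' j)) :
    ∃ π : Equiv.Perm I, (∀ p ∈ P, π p = p) ∧
        {x : I | π x ≠ x}.Finite ∧ ∀ i : Fin n, π (ξ' i) = ξ i := by
  classical
  have hTfin : (Set.range ξ ∪ Set.range ξ').Finite :=
    (Set.finite_range ξ).union (Set.finite_range ξ')
  set T : Set I := Set.range ξ ∪ Set.range ξ' with hT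
  haveI : Fintype T := hTfin.fintype
  have memT₁ : ∀ i : Fin n, ξ i ∈ T := fun i => Or.inl ⟨i, rfl⟩
  have memT₂ : ∀ i : Fin n, ξ' i ∈ T := fun i => Or.inr ⟨i, rfl⟩
  set pA : T → Prop := fun x => (x : I) ∈ Set.range ξ' with hpA
  set pB : T → Prop := fun x => (x : I) ∈ Set.range ξ with hpB
  let fwd : {x : T // pA x} → {x : T // pB x} :=
    fun x => ⟨⟨ξ (Classical.choose x.2), memT₁ _⟩, ⟨_, rfl⟩⟩
  let bwd : {x : T // pB x} → {x : T // pA x} :=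
    fun x => ⟨⟨ξ' (Classical.choose x.2), memT₂ _⟩, ⟨_, rfl⟩⟩
  have fwd_key : ∀ (x : {x : T // pA x}) (i : Fin n), ξ' i = (x : I) → (fwd x : I) = ξ i := by
    intro x i hi
    have := Classical.choose_spec x.2
    exact (hpat _ _).2 (this.trans hi.symm)
  have bwd_key : ∀ (x : {x : T // pB x}) (i : Fin n), ξ i = (x : I) → (bwd x : I) = ξ' i := by
    intro x i hi
    have := Classical.choose_spec x.2
    exact (hpat _ _).1 (this.trans hi.symm)
  have linv : ∀ x, bwd (fwd x) = x := by
    intro x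
    obtain ⟨i, hi⟩ := x.2
    have h1 : (fwd x : I) = ξ i := fwd_key x i hi
    have h2 : (bwd (fwd x) : I) = ξ' i := bwd_key (fwd x) i h1.symm
    exact Subtype.ext (Subtype.ext (h2.trans hi))
  have rinv : ∀ x, fwd (bwd x) = x := by
    intro x
    obtain ⟨i, hi⟩ := x.2
    have h1 : (bwd x : I) = ξ' i := bwd_key x i hi
    have h2 : (fwd (bwd x) : I) = ξ i := fwd_key (bwd x) i h1.symm
    exact Subtype.ext (Subtype.ext (h2.trans hi))
  let e1 : {x : T // pA x} ≃ {x : T // pB x} := ⟨fwd, bwd, linv, rinv⟩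
  have hcard : Fintype.card {x : T // ¬ pA x} = Fintype.card {x : T // ¬ pB x} := by
    have h1 : Fintype.card {x : T // pA x} = Fintype.card {x : T // pB x} :=
      Fintype.card_congr e1
    have h2 := Fintype.card_subtype_compl pA
    have h3 := Fintype.card_subtype_compl pB
    omega
  let e2 : {x : T // ¬ pA x} ≃ {x : T // ¬ pB x} := Fintype.equivOfCardEq hcard
  let σ : Equiv.Perm T :=
    (Equiv.sumCompl pA).symm.trans ((e1.sumCongr e2).trans (Equiv.sumCompl pB))
  have hσA : ∀ (x : T) (h : pA x), σ x = (e1 ⟨x, h⟩ : T) := by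
    intro x h
    simp only [σ, Equiv.trans_apply, Equiv.sumCompl_symm_apply_of_pos h,
      Equiv.sumCongr_apply, Sum.map_inl, Equiv.sumCompl_apply_inl]
  let π : Equiv.Perm I := σ.extendDomain (Equiv.refl T)
  have hπT : ∀ (x : I) (h : x ∈ T), π x = ((σ ⟨x, h⟩ : T) : I) := by
    intro x h
    have := Equiv.Perm.extendDomain_apply_subtype σ (Equiv.refl T) (b := x) h
    simpa [π] using this
  have hπnT : ∀ x : I, x ∉ T → π x = x := fun x h =>
    Equiv.Perm.extendDomain_apply_not_subtype σ (Equiv.refl T) h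
  refine ⟨π, ?_, ?_, ?_⟩
  · intro p hp
    by_cases hpT : p ∈ T
    · have hkey : ∃ i : Fin n, ξ' i = p ∧ ξ i = p := by
        rcases hpT with ⟨i, hi⟩ | ⟨i, hi⟩
        · exact ⟨i, (hmem i (Or.inl (hi ▸ hp))).symm.trans hi, hi⟩
        · exact ⟨i, hi, (hmem i (Or.inr (hi ▸ hp))).trans hi⟩
      obtain ⟨i, hi, hi'⟩ := hkey
      have hA : pA ⟨p, hpT⟩ := ⟨i, hi⟩
      rw [hπT p hpT, hσA _ hA]
      exact (fwd_key ⟨⟨p, hpT⟩, hA⟩ i hi).trans hi'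
    · exact hπnT p hpT
  · refine hTfin.subset fun x hx => ?_
    by_contra h
    exact hx (hπnT x h)
  · intro i
    have hA : pA ⟨ξ' i, memT₂ i⟩ := ⟨i, rfl⟩
    rw [hπT _ (memT₂ i), hσA _ hA]
    exact fwd_key ⟨⟨ξ' i, memT₂ i⟩, hA⟩ i rfl

/-- Two tuples `ξ, ξ'` over an infinite set `I` are related by a finitary
permutation of `I` fixing the finite set `P` pointwise (with `π (ξ' i) = ξ i`
for all `i`) if and only if they agree at every component meeting `P` and have
the same equality pattern. -/
theorem exists_perm_mapping_tuple_iff {I : Type*} [Infinite I]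
    (P : Set I) (hP : P.Finite) (n : ℕ) (ξ ξ' : Fin n → I) :
    (∃ π : Equiv.Perm I, (∀ p ∈ P, π p = p) ∧
        {x : I | π x ≠ x}.Finite ∧ ∀ i : Fin n, π (ξ' i) = ξ i) ↔
      ((∀ i : Fin n, (ξ i ∈ P ∨ ξ' i ∈ P) → ξ i = ξ' i) ∧
        ∀ i j : Fin n, (ξ i = ξ j ↔ ξ' i = ξ' j)) := by
  constructor
  · rintro ⟨π, hπP, -, hπξ⟩
    constructor
    · intro i hi
      rcases hi with h | h
      · have h1 : π (ξ i) = ξ i := hπP _ h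
        have h2 : π (ξ' i) = ξ i := hπξ i
        exact π.injective (h1.trans h2.symm)
      · exact (hπξ i).symm.trans (hπP _ h)
    · intro i j
      rw [← hπξ i, ← hπξ j]
      exact ⟨fun h => π.injective h, fun h => congrArg π h⟩
  · rintro ⟨hmem, hpat⟩
    exact aux n ξ ξ' P hmem hpat
end

section
/- Let I be an infinite set, P ⊆ I finite, and n ≥ 1. The orbits of the group of all permutations of I fixing each element of P, acting componentwise on Fin n → I, are exactly the blocks α_{e,𝒦} of the P-and-id adequate partition of Iⁿ. -/
/-- Key lemma: if `ξ₀` lies in the block `α_{e,𝒦}`, then its orbit under the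
pointwise stabilizer of `P` is exactly that block. -/
theorem orbit_eq_block {I : Type*} [Infinite I] (P : Set I) (hP : P.Finite)
    {n : ℕ} (e : Fin n → Option P) (𝒦 : Set (Set (Fin n)))
    (ξ₀ : Fin n → I) (h0 : ξ₀ ∈ PIdBlock P e 𝒦) :
    {ξ | ∃ π : Equiv.Perm I, (∀ p ∈ P, π p = p) ∧ ⇑π ∘ ξ₀ = ξ} = PIdBlock P e 𝒦 := by
  classical
  obtain ⟨hB0, hA0⟩ := h0
  ext ξ
  simp only [Set.mem_setOf_eq]
  constructor
  · rintro ⟨π, hπP, rfl⟩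
    have hmemP : ∀ x : I, π x ∈ P ↔ x ∈ P := by
      intro x
      constructor
      · intro hx
        have h1 : π (π x) = π x := hπP _ hx
        have h2 := π.injective h1
        rwa [h2] at hx
      · intro hx; rw [hπP x hx]; exact hx
    constructor
    · intro i
      constructor
      · intro p hp
        have h1 : ξ₀ i = p := (hB0 i).1 p hp
        simp only [Function.comp_apply, h1]
        exact hπP _ p.2
      · intro hi
        have h1 := (hB0 i).2 hi
        simpa [Function.comp_apply, hmemP] using h1
    · intro i hi j hj
      simp only [Function.comp_apply, EmbeddingLike.apply_eq_iff_eq]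
      exact hA0 i hi j hj
  · rintro ⟨hB, hA⟩
    have hnone : ∀ i, ξ₀ i ∉ P → e i = none := by
      intro i hi
      cases he : e i with
      | none => rfl
      | some p => exact absurd ((hB0 i).1 p he ▸ p.2) hi
    have hkey : ∀ i j, e i = none → ξ₀ i = ξ₀ j → e j = none ∧ ξ i = ξ j := by
      intro i j hi hij
      have hi' : ξ₀ i ∉ P := (hB0 i).2 hi
      have hj : e j = none := hnone j (hij ▸ hi')
      exact ⟨hj, (hA i hi j hj).mpr ((hA0 i hi j hj).mp hij)⟩
    set f : I → I := fun x => if h : ∃ i, e i = none ∧ ξ₀ i = x then ξ h.choose else x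
      with hf
    have hfP : ∀ x ∈ P, f x = x := by
      intro x hx
      have hno : ¬ ∃ i, e i = none ∧ ξ₀ i = x := by
        rintro ⟨i, hi, rfl⟩
        exact (hB0 i).2 hi hx
      simp only [hf, dif_neg hno]
    have hfξ : ∀ i, f (ξ₀ i) = ξ i := by
      intro i
      cases he : e i with
      | some p =>
        have h1 : ξ₀ i = p := (hB0 i).1 p he
        have h2 : ξ i = p := (hB i).1 p he
        have h3 : f (ξ₀ i) = ξ₀ i := hfP _ (h1 ▸ p.2)
        rw [h3, h1, h2]
      | none =>
        have hex : ∃ j, e j = none ∧ ξ₀ j = ξ₀ i := ⟨i, he, rfl⟩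
        have hspec := hex.choose_spec
        have h4 : f (ξ₀ i) = ξ hex.choose := by simp only [hf, dif_pos hex]
        rw [h4]
        exact (hkey _ i hspec.1 hspec.2).2
    have hfmemP : ∀ x, (f x ∈ P ↔ x ∈ P) := by
      intro x
      by_cases h : ∃ i, e i = none ∧ ξ₀ i = x
      · have h1 : f x = ξ h.choose := by simp only [hf, dif_pos h]
        obtain ⟨hc1, hc2⟩ := h.choose_spec
        rw [h1]
        exact iff_of_false ((hB _).2 hc1) (hc2 ▸ (hB0 _).2 hc1)
      · simp only [hf, dif_neg h]
    have hinj2 : ∀ x ∈ P ∪ Set.range ξ₀, x ∉ P → ∃ i, e i = none ∧ ξ₀ i = x := by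
      intro x hx hxP
      rcases hx with h | ⟨i, rfl⟩
      · exact absurd h hxP
      · exact ⟨i, hnone i hxP, rfl⟩
    have hinj : ∀ x ∈ P ∪ Set.range ξ₀, ∀ y ∈ P ∪ Set.range ξ₀, f x = f y → x = y := by
      intro x hx y hy hxy
      by_cases hxP : x ∈ P
      · by_cases hyP : y ∈ P
        · rw [hfP x hxP, hfP y hyP] at hxy; exact hxy
        · have h1 : f y ∈ P := by rw [← hxy, hfP x hxP]; exact hxP
          exact absurd ((hfmemP y).mp h1) hyP
      · by_cases hyP : y ∈ P
        · have h1 : f x ∈ P := by rw [hxy, hfP y hyP]; exact hyP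
          exact absurd ((hfmemP x).mp h1) hxP
        · obtain ⟨i, hi, rfl⟩ := hinj2 x hx hxP
          obtain ⟨j, hj, rfl⟩ := hinj2 y hy hyP
          rw [hfξ i, hfξ j] at hxy
          exact (hA0 i hi j hj).mpr ((hA i hi j hj).mp hxy)
    have hs : (P ∪ Set.range ξ₀).Finite := hP.union (Set.finite_range ξ₀)
    let fs : (P ∪ Set.range ξ₀ : Set I) ↪ I :=
      ⟨fun x => f x, fun a b hab => Subtype.ext (hinj a a.2 b b.2 hab)⟩
    have hslt : Cardinal.mk (P ∪ Set.range ξ₀ : Set I) < Cardinal.mk I :=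
      lt_of_lt_of_le hs.lt_aleph0 (Cardinal.aleph0_le_mk I)
    obtain ⟨g, hg⟩ := Cardinal.extend_function_of_lt fs hslt ⟨Equiv.refl I⟩
    refine ⟨g, ?_, ?_⟩
    · intro p hp
      have h1 := hg ⟨p, Or.inl hp⟩
      exact h1.trans (hfP p hp)
    · funext i
      have h1 := hg ⟨ξ₀ i, Or.inr ⟨i, rfl⟩⟩
      exact h1.trans (hfξ i)

/-- Over an infinite set `I`, the orbits of the group of permutations of `I`
fixing a finite set `P` pointwise, acting componentwise on tuples `Fin n → I`,
are exactly the blocks `α_{e,𝒦}` of the `P`-and-`id` adequate partition of `Iⁿ`. -/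
theorem orbits_eq_P_and_id_blocks {I : Type*} [Infinite I] (P : Set I)
    (hP : P.Finite) (n : ℕ) (hn : 1 ≤ n) :
    ∀ s : Set (Fin n → I),
      (∃ ξ₀ : Fin n → I,
          s = {ξ | ∃ π : Equiv.Perm I, (∀ p ∈ P, π p = p) ∧ ⇑π ∘ ξ₀ = ξ}) ↔
      (∃ (e : Fin n → Option P) (𝒦 : Set (Set (Fin n))),
          IsPartitionOf 𝒦 (idxOf e) ∧ s = PIdBlock P e 𝒦) := by
  classical
  intro s
  constructor
  · rintro ⟨ξ₀, rfl⟩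
    set e : Fin n → Option P := fun i => if h : ξ₀ i ∈ P then some ⟨ξ₀ i, h⟩ else none
      with he_def
    have he_none : ∀ i, e i = none ↔ ξ₀ i ∉ P := by
      intro i; by_cases h : ξ₀ i ∈ P <;> simp [he_def, h]
    set 𝒦 : Set (Set (Fin n)) :=
      {K | ∃ i, e i = none ∧ K = {j | e j = none ∧ ξ₀ j = ξ₀ i}} with h𝒦_def
    have hB0 : ξ₀ ∈ Bblock P e := by
      intro i
      constructor
      · intro p hp
        by_cases h : ξ₀ i ∈ P
        · simp only [he_def, dif_pos h] at hp
          have h2 := Option.some.inj hp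
          rw [← h2]
        · simp [he_def, h] at hp
      · intro h; exact (he_none i).mp h
    have hA0 : ξ₀ ∈ eqPatternBlock (idxOf e) 𝒦 := by
      intro i hi j hj
      have hi' : e i = none := hi
      have hj' : e j = none := hj
      constructor
      · intro hij
        exact ⟨{k | e k = none ∧ ξ₀ k = ξ₀ i}, ⟨i, hi', rfl⟩, ⟨hi', rfl⟩, ⟨hj', hij.symm⟩⟩
      · rintro ⟨K, ⟨k, hk, rfl⟩, ⟨-, hik⟩, ⟨-, hjk⟩⟩
        exact hik.trans hjk.symm
    have hpart : IsPartitionOf 𝒦 (idxOf e) := by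
      refine ⟨?_, ?_, ?_⟩
      · rintro K ⟨i, hi, rfl⟩
        exact ⟨i, hi, rfl⟩
      · rintro K₁ ⟨i₁, hi₁, rfl⟩ K₂ ⟨i₂, hi₂, rfl⟩ hne
        refine Set.disjoint_left.mpr ?_
        rintro j ⟨hj, hj1⟩ ⟨-, hj2⟩
        apply hne
        have h12 : ξ₀ i₁ = ξ₀ i₂ := hj1.symm.trans hj2
        rw [h12]
      · ext i
        simp only [Set.mem_sUnion]
        constructor
        · rintro ⟨K, ⟨k, hk, rfl⟩, hiK⟩
          exact hiK.1
        · intro hi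
          exact ⟨_, ⟨i, hi, rfl⟩, hi, rfl⟩
    exact ⟨e, 𝒦, hpart, orbit_eq_block P hP e 𝒦 ξ₀ ⟨hB0, hA0⟩⟩
  · rintro ⟨e, 𝒦, h𝒦, rfl⟩
    haveI : Finite (↥𝒦) := Subtype.finite
    haveI : Infinite (↥(Pᶜ)) := (hP.infinite_compl).to_subtype
    have hgex : Nonempty (↥𝒦 ↪ ↥(Pᶜ)) := by
      haveI : Fintype (↥𝒦) := Fintype.ofFinite _
      exact ⟨(Fintype.equivFin (↥𝒦)).toEmbedding.trans
        (Fin.valEmbedding.trans (Infinite.natEmbedding (↥(Pᶜ))))⟩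
    obtain ⟨g⟩ := hgex
    have hmem : ∀ i, e i = none → ∃ K ∈ 𝒦, i ∈ K := by
      intro i hi
      have h1 : i ∈ ⋃₀ 𝒦 := by rw [h𝒦.2.2]; exact hi
      exact Set.mem_sUnion.mp h1
    set Kof : Fin n → Set (Fin n) :=
      (fun i => if h : e i = none then (hmem i h).choose else ∅) with hKof_def
    have hKof𝒦 : ∀ i, e i = none → Kof i ∈ 𝒦 ∧ i ∈ Kof i := by
      intro i h
      simp only [hKof_def, dif_pos h]
      exact (hmem i h).choose_spec
    have huniq : ∀ K ∈ 𝒦, ∀ i ∈ K, e i = none → Kof i = K := by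
      intro K hK i hiK hi
      by_contra hne
      exact Set.disjoint_left.mp (h𝒦.2.1 (hKof𝒦 i hi).1 hK hne) (hKof𝒦 i hi).2 hiK
    set ξ₀ : Fin n → I := fun i =>
      if h : e i = none then ((g ⟨Kof i, (hKof𝒦 i h).1⟩ : ↥(Pᶜ)) : I)
      else (((e i).get (Option.isSome_iff_ne_none.mpr h) : P) : I) with hξ₀_def
    have hξ₀B : ξ₀ ∈ Bblock P e := by
      intro i
      constructor
      · intro p hp
        have h : ¬ e i = none := by rw [hp]; simp
        simp only [hξ₀_def, dif_neg h]
        congr 1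
        simp [hp]
      · intro h
        simp only [hξ₀_def, dif_pos h]
        exact (g ⟨Kof i, (hKof𝒦 i h).1⟩).2
    have hξ₀A : ξ₀ ∈ eqPatternBlock (idxOf e) 𝒦 := by
      intro i hi j hj
      have hi' : e i = none := hi
      have hj' : e j = none := hj
      simp only [hξ₀_def, dif_pos hi', dif_pos hj']
      constructor
      · intro hgij
        have h1 : (⟨Kof i, (hKof𝒦 i hi').1⟩ : ↥𝒦) = ⟨Kof j, (hKof𝒦 j hj').1⟩ :=
          g.injective (Subtype.ext hgij)
        have hK : Kof i = Kof j := congrArg Subtype.val h1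
        exact ⟨Kof i, (hKof𝒦 i hi').1, (hKof𝒦 i hi').2, hK ▸ (hKof𝒦 j hj').2⟩
      · rintro ⟨K, hK, hiK, hjK⟩
        have h1 : Kof i = K := huniq K hK i hiK hi'
        have h2 : Kof j = K := huniq K hK j hjK hj'
        exact congrArg (fun K : ↥𝒦 => ((g K : ↥(Pᶜ)) : I)) (Subtype.ext (h1.trans h2.symm))
    exact ⟨ξ₀, (orbit_eq_block P hP e 𝒦 ξ₀ ⟨hξ₀B, hξ₀A⟩).symm⟩
end

section
/- Let I be an infinite set, P ⊆ I finite, and n ≥ 1. A subset s ⊆ (Fin n → I) satisfies {π ∘ ξ | ξ ∈ s} = s for every permutation π of I fixing each element of P if and only if s is a union of blocks α_{e,𝒦} of the P-and-id adequate partition of Iⁿ. In particular, every finitely supported subset of Fin n → I is a union of blocks of the P-and-id adequate partition for some finite P ⊆ I. -/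
section Aux
variable {I : Type*}

/-- A permutation fixing `P` pointwise maps the complement of `P` into itself. -/
lemma mem_of_perm_mem {P : Set I} (π : Equiv.Perm I) (hπ : ∀ p ∈ P, π p = p)
    {x : I} (hx : π x ∈ P) : x ∈ P := by
  have h := hπ _ hx
  have : π x = x := π.injective h
  rwa [← this]

/-- Extend a bijection between two disjoint finite families to a permutation
fixing everything else. -/
lemma exists_perm_disjoint [DecidableEq I] :
    ∀ (m : ℕ) (a b : Fin m → I), Function.Injective a → Function.Injective b →
    (∀ k l, a k ≠ b l) →
    ∃ π : Equiv.Perm I, (∀ x, (∀ k, x ≠ a k) → (∀ k, x ≠ b k) → π x = x) ∧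
      ∀ k, π (a k) = b k
  | 0, a, b, _, _, _ => ⟨1, fun x _ _ => rfl, fun k => k.elim0⟩
  | (m + 1), a, b, ha, hb, hd => by
    obtain ⟨π', h1, h2⟩ := exists_perm_disjoint m (a ∘ Fin.castSucc) (b ∘ Fin.castSucc)
      (ha.comp (Fin.castSucc_injective m)) (hb.comp (Fin.castSucc_injective m))
      (fun k l => hd _ _)
    refine ⟨π' * Equiv.swap (a (Fin.last m)) (b (Fin.last m)), ?_, ?_⟩
    · intro x hxa hxb
      simp only [Equiv.Perm.mul_apply]
      rw [Equiv.swap_apply_of_ne_of_ne (hxa _) (hxb _)]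
      exact h1 x (fun k => hxa _) (fun k => hxb _)
    · intro k
      induction k using Fin.lastCases with
      | last =>
        simp only [Equiv.Perm.mul_apply, Equiv.swap_apply_left]
        refine h1 _ (fun k => (hd (Fin.castSucc k) (Fin.last m)).symm) (fun k => ?_)
        intro h
        exact absurd (hb h) (by simp [Fin.ext_iff, (Fin.castSucc_lt_last k).ne'])
      | cast j =>
        have hne1 : a j.castSucc ≠ a (Fin.last m) := fun h =>
          absurd (ha h) (by simp [Fin.ext_iff, (Fin.castSucc_lt_last j).ne])
        simp only [Equiv.Perm.mul_apply]
        rw [Equiv.swap_apply_of_ne_of_ne hne1 (hd _ _)]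
        exact h2 j

end Aux

section Aux2
variable {I : Type*} [Infinite I]

lemma exists_perm_maps (P : Set I) (hP : P.Finite) (m : ℕ) (a b : Fin m → I)
    (ha : Function.Injective a) (hb : Function.Injective b)
    (haP : ∀ k, a k ∉ P) (hbP : ∀ k, b k ∉ P) :
    ∃ π : Equiv.Perm I, (∀ p ∈ P, π p = p) ∧ ∀ k, π (a k) = b k := by
  classical
  have hinf : (P ∪ (Set.range a ∪ Set.range b))ᶜ.Infinite := by
    apply Set.Finite.infinite_compl
    exact hP.union ((Set.finite_range a).union (Set.finite_range b))
  let emb := hinf.natEmbedding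
  set c : Fin m → I := fun k => (emb k : I) with hc
  have hcmem : ∀ k, (c k) ∈ (P ∪ (Set.range a ∪ Set.range b))ᶜ := fun k => (emb k).2
  have hcinj : Function.Injective c := by
    intro k l h
    exact Fin.val_injective (by exact_mod_cast emb.injective (Subtype.ext h))
  have hca : ∀ k l, a k ≠ c l := by
    intro k l h
    exact (hcmem l) (Or.inr (Or.inl ⟨k, h⟩))
  have hcb : ∀ k l, c k ≠ b l := by
    intro k l h
    exact (hcmem k) (Or.inr (Or.inr ⟨l, h.symm⟩))
  obtain ⟨π₁, hπ₁fix, hπ₁⟩ := exists_perm_disjoint m a c ha hcinj hca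
  obtain ⟨π₂, hπ₂fix, hπ₂⟩ := exists_perm_disjoint m c b hcinj hb hcb
  refine ⟨π₂ * π₁, ?_, ?_⟩
  · intro p hp
    have h1 : π₁ p = p := hπ₁fix p (fun k h => haP k (h ▸ hp))
      (fun k h => (hcmem k) (Or.inl (h ▸ hp)))
    have h2 : π₂ p = p := hπ₂fix p (fun k h => (hcmem k) (Or.inl (h ▸ hp)))
      (fun k h => hbP k (h ▸ hp))
    simp [Equiv.Perm.mul_apply, h1, h2]
  · intro k
    simp [Equiv.Perm.mul_apply, hπ₁ k, hπ₂ k]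

end Aux2

section Aux3
variable {I : Type*} [Infinite I]

lemma exists_perm_tuple {n : ℕ} (P : Set I) (hP : P.Finite) (ξ η : Fin n → I)
    (h1 : ∀ i, ξ i ∈ P → η i = ξ i)
    (h2 : ∀ i, ξ i ∉ P → η i ∉ P)
    (h3 : ∀ i j, ξ i ∉ P → ξ j ∉ P → (ξ i = ξ j ↔ η i = η j)) :
    ∃ π : Equiv.Perm I, (∀ p ∈ P, π p = p) ∧ ⇑π ∘ ξ = η := by
  classical
  set T : Set (Fin n) := {i | ξ i ∉ P} with hT
  have hA : (ξ '' T).Finite := (Set.toFinite T).image ξ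
  set m := hA.toFinset.card with hm
  set g := hA.toFinset.equivFin with hg
  set a : Fin m → I := fun k => ((g.symm k : hA.toFinset) : I) with ha
  have hamem : ∀ k, a k ∈ ξ '' T := fun k => by
    have := (g.symm k).2
    rwa [Set.Finite.mem_toFinset] at this
  have hainj : Function.Injective a := by
    intro k l h
    have : (g.symm k) = (g.symm l) := Subtype.ext h
    simpa using g.symm.injective this
  have hex : ∀ k : Fin m, ∃ i, ξ i ∉ P ∧ ξ i = a k := by
    intro k
    obtain ⟨i, hi, hvi⟩ := hamem k
    exact ⟨i, hi, hvi⟩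
  choose idxk hidxP hidxval using hex
  set b : Fin m → I := fun k => η (idxk k) with hb
  have hbP : ∀ k, b k ∉ P := fun k => h2 _ (hidxP k)
  have haP : ∀ k, a k ∉ P := fun k => (hidxval k) ▸ hidxP k
  have hbinj : Function.Injective b := by
    intro k l h
    apply hainj
    rw [← hidxval k, ← hidxval l]
    exact (h3 _ _ (hidxP k) (hidxP l)).mpr h
  obtain ⟨π, hπfix, hπ⟩ := exists_perm_maps P hP m a b hainj hbinj haP hbP
  refine ⟨π, hπfix, ?_⟩
  funext i
  by_cases hi : ξ i ∈ P
  · simpa [hπfix _ hi] using (h1 i hi).symm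
  · have hmem : ξ i ∈ hA.toFinset := by
      rw [Set.Finite.mem_toFinset]; exact ⟨i, hi, rfl⟩
    set k := g ⟨ξ i, hmem⟩ with hk
    have hak : a k = ξ i := by simp [ha, hk]
    have : π (ξ i) = b k := by rw [← hak]; exact hπ k
    simp only [Function.comp_apply, this, hb]
    exact (h3 _ _ (hidxP k) hi).mp (by rw [hidxval k, hak])
end Aux3

section Aux4
variable {I : Type*} [Infinite I]

lemma main_equiv (n : ℕ) (P : Set I) (hP : P.Finite) (s : Set (Fin n → I)) :
    (∀ π : Equiv.Perm I, (∀ p ∈ P, π p = p) →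
        (fun ξ => ⇑π ∘ ξ) '' s = s) ↔
    (∃ F : Set ((Fin n → Option P) × Set (Set (Fin n))),
      (∀ q ∈ F, IsPartitionOf q.2 (idxOf q.1)) ∧
      s = ⋃ q ∈ F, PIdBlock P q.1 q.2) := by
  classical
  constructor
  · -- hard direction
    intro hinv
    refine ⟨{q | IsPartitionOf q.2 (idxOf q.1) ∧ PIdBlock P q.1 q.2 ⊆ s},
      fun q hq => hq.1, ?_⟩
    apply Set.Subset.antisymm
    · intro ξ hξ
      set e : Fin n → Option P := fun i => if h : ξ i ∈ P then some ⟨ξ i, h⟩ else none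
        with he
      have hidx : ∀ i, i ∈ idxOf e ↔ ξ i ∉ P := by
        intro i
        simp only [idxOf, Set.mem_setOf_eq, he]
        by_cases h : ξ i ∈ P <;> simp [h]
      set 𝒦 : Set (Set (Fin n)) :=
        {K | ∃ i, ξ i ∉ P ∧ K = {j | ξ j ∉ P ∧ ξ j = ξ i}} with h𝒦
      have hpat : ∀ i j, ξ i ∉ P → ξ j ∉ P →
          ((∃ K ∈ 𝒦, i ∈ K ∧ j ∈ K) ↔ ξ i = ξ j) := by
        intro i j hi hj
        constructor
        · rintro ⟨K, ⟨l, hl, rfl⟩, ⟨_, hil⟩, ⟨_, hjl⟩⟩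
          rw [hil, hjl]
        · intro hij
          exact ⟨{j' | ξ j' ∉ P ∧ ξ j' = ξ i}, ⟨i, hi, rfl⟩, ⟨hi, rfl⟩, ⟨hj, hij.symm⟩⟩
      have hpart : IsPartitionOf 𝒦 (idxOf e) := by
        refine ⟨?_, ?_, ?_⟩
        · rintro K ⟨i, hi, rfl⟩
          exact ⟨i, hi, rfl⟩
        · rintro K ⟨i, hi, rfl⟩ K' ⟨i', hi', rfl⟩ hne
          rw [Function.onFun, Set.disjoint_left]
          rintro l ⟨hl, hli⟩ ⟨_, hli'⟩
          refine hne ?_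
          have : ξ i = ξ i' := by rw [← hli, hli']
          ext j
          simp only [Set.mem_setOf_eq, this]
        · ext i
          simp only [Set.mem_sUnion, hidx i]
          constructor
          · rintro ⟨K, ⟨l, hl, rfl⟩, hiK⟩
            exact hiK.1
          · intro hi
            exact ⟨{j | ξ j ∉ P ∧ ξ j = ξ i}, ⟨i, hi, rfl⟩, ⟨hi, rfl⟩⟩
      have hξmem : ξ ∈ PIdBlock P e 𝒦 := by
        constructor
        · intro i
          constructor
          · intro p hp
            by_cases h : ξ i ∈ P
            · simp only [he, dif_pos h, Option.some_inj] at hp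
              exact congrArg Subtype.val hp
            · simp [he, dif_neg h] at hp
          · intro hnone
            rwa [← hidx i]
        · intro i hi j hj
          rw [hidx] at hi hj
          exact (hpat i j hi hj).symm
      have hsub : PIdBlock P e 𝒦 ⊆ s := by
        intro η hη
        have hB := hη.1
        have hE := hη.2
        have hη1 : ∀ i, ξ i ∈ P → η i = ξ i := by
          intro i hi
          have := (hB i).1 ⟨ξ i, hi⟩ (by simp [he, dif_pos hi])
          exact this
        have hη2 : ∀ i, ξ i ∉ P → η i ∉ P := by
          intro i hi
          exact (hB i).2 (by simp [he, dif_neg hi])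
        have hη3 : ∀ i j, ξ i ∉ P → ξ j ∉ P → (ξ i = ξ j ↔ η i = η j) := by
          intro i j hi hj
          rw [← hpat i j hi hj]
          exact (hE i ((hidx i).mpr hi) j ((hidx j).mpr hj)).symm
        obtain ⟨π, hπfix, hπ⟩ := exists_perm_tuple P hP ξ η hη1 hη2 hη3
        rw [← hinv π hπfix]
        exact ⟨ξ, hξ, hπ⟩
      exact Set.mem_biUnion (show (e, 𝒦) ∈ _ from ⟨hpart, hsub⟩) hξmem
    · intro ξ hξ
      simp only [Set.mem_iUnion] at hξ
      obtain ⟨q, hq, hξ⟩ := hξ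
      exact hq.2 hξ
  · -- easy direction
    rintro ⟨F, hF, rfl⟩
    have key : ∀ (σ : Equiv.Perm I), (∀ p ∈ P, σ p = p) →
        (fun ξ => ⇑σ ∘ ξ) '' (⋃ q ∈ F, PIdBlock P q.1 q.2) ⊆
          ⋃ q ∈ F, PIdBlock P q.1 q.2 := by
      rintro σ hσ _ ⟨ξ, hξ, rfl⟩
      simp only [Set.mem_iUnion] at hξ ⊢
      obtain ⟨q, hq, hB, hE⟩ := hξ
      refine ⟨q, hq, ?_, ?_⟩
      · intro i
        refine ⟨fun p hp => ?_, fun hnone => ?_⟩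
        · simp only [Function.comp_apply, (hB i).1 p hp, hσ _ p.2]
        · intro hmem
          exact (hB i).2 hnone (mem_of_perm_mem σ hσ hmem)
      · intro i hi j hj
        rw [← hE i hi j hj]
        simp only [Function.comp_apply]
        exact ⟨fun h => σ.injective h, fun h => by rw [h]⟩
    intro π hπ
    apply Set.Subset.antisymm (key π hπ)
    intro ξ hξ
    have hπinv : ∀ p ∈ P, π⁻¹ p = p := by
      intro p hp
      apply π.injective
      rw [Equiv.Perm.inv_def, Equiv.apply_symm_apply, hπ p hp]
    have : ⇑π⁻¹ ∘ ξ ∈ ⋃ q ∈ F, PIdBlock P q.1 q.2 := key π⁻¹ hπinv ⟨ξ, hξ, rfl⟩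
    refine ⟨⇑π⁻¹ ∘ ξ, this, ?_⟩
    funext i
    simp

end Aux4
/-- A set of tuples over an infinite set `I` is invariant under the
componentwise action of every permutation fixing the finite set `P` pointwise
iff it is a union of blocks of the `P`-and-`id` adequate partition of `Iⁿ`;
in particular, every finitely supported set of tuples is a union of blocks of
the `Q`-and-`id` adequate partition for some finite `Q ⊆ I`. -/
theorem invariant_iff_union_of_P_and_id_blocks {I : Type*} [Infinite I]
    (n : ℕ) (hn : 1 ≤ n) (P : Set I) (hP : P.Finite) :
    (∀ s : Set (Fin n → I),
      (∀ π : Equiv.Perm I, (∀ p ∈ P, π p = p) →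
          (fun ξ => ⇑π ∘ ξ) '' s = s) ↔
      (∃ F : Set ((Fin n → Option P) × Set (Set (Fin n))),
        (∀ q ∈ F, IsPartitionOf q.2 (idxOf q.1)) ∧
        s = ⋃ q ∈ F, PIdBlock P q.1 q.2)) ∧
    (∀ s : Set (Fin n → I),
      (∃ Q : Set I, Q.Finite ∧
        ∀ π : Equiv.Perm I, (∀ p ∈ Q, π p = p) →
          (fun ξ => ⇑π ∘ ξ) '' s = s) →
      (∃ Q : Set I, Q.Finite ∧
        ∃ F : Set ((Fin n → Option Q) × Set (Set (Fin n))),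
          (∀ q ∈ F, IsPartitionOf q.2 (idxOf q.1)) ∧
          s = ⋃ q ∈ F, PIdBlock Q q.1 q.2)) := by
  refine ⟨fun s => main_equiv n P hP s, ?_⟩
  rintro s ⟨Q, hQ, hinvQ⟩
  exact ⟨Q, hQ, (main_equiv n Q hQ s).mp hinvQ⟩
end

section
/- Let I be an infinite set, n, m ≥ 1, P ⊆ I finite, and let R be a relation between tuples ξ : Fin n → I and sets δ ⊆ (Fin m → I) such that for every permutation π of I fixing each element of P, every ξ, and every δ: R ξ δ holds if and only if R (π ∘ ξ) (π · δ) holds, where π · δ = {π ∘ η | η ∈ δ}. Assume that for every ξ : Fin n → I there exists a finitely supported δ ⊆ (Fin m → I) with R ξ δ. Then there exists a set σ ⊆ (Fin n → I) × (Fin m → I) that is finitely supported with respect to the diagonal action (i.e. there is a finite Q ⊆ I such that {(π ∘ ξ, π ∘ η) | (ξ, η) ∈ σ} = σ for every permutation π fixing each element of Q) and such that for every ξ : Fin n → I, the slice σ_ξ = {η | (ξ, η) ∈ σ} is finitely supported and R ξ σ_ξ holds. -/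
/-- A set of `m`-tuples over `I` is finitely supported if it is invariant under
the componentwise action of every permutation of `I` fixing some finite set
pointwise. -/
def FinSuppSet {I : Type*} {m : ℕ} (δ : Set (Fin m → I)) : Prop :=
  ∃ Q : Set I, Q.Finite ∧
    ∀ π : Equiv.Perm I, (∀ p ∈ Q, π p = p) → (fun η => ⇑π ∘ η) '' δ = δ

/-- A set of pairs of tuples is finitely supported with respect to the diagonal
action. -/
def FinSuppRel {I : Type*} {n m : ℕ}
    (σ : Set ((Fin n → I) × (Fin m → I))) : Prop :=
  ∃ Q : Set I, Q.Finite ∧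
    ∀ π : Equiv.Perm I, (∀ p ∈ Q, π p = p) →
      (fun q => (⇑π ∘ q.1, ⇑π ∘ q.2)) '' σ = σ

open Function Set

private lemma perm_of_disjoint {I : Type*} {r : ℕ} (v w : Fin r → I)
    (hv : Function.Injective v) (hw : Function.Injective w)
    (hd : ∀ i j, v i ≠ w j) :
    ∃ π : Equiv.Perm I, (∀ i, π (v i) = w i) ∧
      ∀ x, (∀ i, x ≠ v i) → (∀ i, x ≠ w i) → π x = x := by
  classical
  induction r with
  | zero => exact ⟨1, fun i => i.elim0, fun x _ _ => rfl⟩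
  | succ r ih =>
    obtain ⟨π, h1, h2⟩ := ih (v ∘ Fin.castSucc) (w ∘ Fin.castSucc)
      (hv.comp (Fin.castSucc_injective r)) (hw.comp (Fin.castSucc_injective r))
      (fun i j => hd _ _)
    have hπvlast : π (v (Fin.last r)) = v (Fin.last r) := by
      apply h2
      · intro i h
        exact (Fin.castSucc_lt_last i).ne' (hv h)
      · intro i
        exact hd _ _
    refine ⟨Equiv.swap (v (Fin.last r)) (w (Fin.last r)) * π, ?_, ?_⟩
    · intro i
      rcases Fin.eq_castSucc_or_eq_last i with ⟨j, rfl⟩ | rfl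
      · have hj : π (v (Fin.castSucc j)) = w (Fin.castSucc j) := h1 j
        rw [Equiv.Perm.mul_apply, hj, Equiv.swap_apply_of_ne_of_ne]
        · exact fun h => hd _ _ h.symm
        · exact fun h => (Fin.castSucc_lt_last j).ne (hw h)
      · rw [Equiv.Perm.mul_apply, hπvlast, Equiv.swap_apply_left]
    · intro x hx1 hx2
      rw [Equiv.Perm.mul_apply, h2 x (fun i => hx1 _) (fun i => hx2 _),
        Equiv.swap_apply_of_ne_of_ne (hx1 _) (hx2 _)]

private lemma perm_extend {I : Type*} [Infinite I] {r : ℕ} (A : Set I)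
    (hA : A.Finite)
    (v w : Fin r → I) (hv : Function.Injective v) (hw : Function.Injective w)
    (hvA : ∀ i, v i ∉ A) (hwA : ∀ i, w i ∉ A) :
    ∃ π : Equiv.Perm I, (∀ a ∈ A, π a = a) ∧ ∀ i, π (v i) = w i := by
  classical
  have hfin : (A ∪ Set.range v ∪ Set.range w).Finite :=
    (hA.union (Set.finite_range v)).union (Set.finite_range w)
  have hcompl : ((A ∪ Set.range v ∪ Set.range w)ᶜ : Set I).Infinite :=
    hfin.infinite_compl
  haveI := hcompl.to_subtype
  let uemb : Fin r ↪ ((A ∪ Set.range v ∪ Set.range w)ᶜ : Set I) :=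
    (Fin.valEmbedding).trans (Infinite.natEmbedding _)
  let u : Fin r → I := fun i => (uemb i : I)
  have hu : Function.Injective u := fun i j h =>
    uemb.injective (Subtype.ext h)
  have humem : ∀ i, u i ∉ A ∪ Set.range v ∪ Set.range w := fun i => (uemb i).2
  obtain ⟨π₁, hπ₁, hπ₁'⟩ := perm_of_disjoint v u hv hu
    (fun i j h => humem j (Or.inl (Or.inr ⟨i, h⟩)))
  obtain ⟨π₂, hπ₂, hπ₂'⟩ := perm_of_disjoint u w hu hw
    (fun i j h => humem i (Or.inr ⟨j, h.symm⟩))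
  refine ⟨π₂ * π₁, ?_, ?_⟩
  · intro a ha
    rw [Equiv.Perm.mul_apply,
      hπ₁' a (fun i h => hvA i (h ▸ ha)) (fun i h => humem i (h ▸ Or.inl (Or.inl ha))),
      hπ₂' a (fun i h => humem i (h ▸ Or.inl (Or.inl ha))) (fun i h => hwA i (h ▸ ha))]
  · intro i
    rw [Equiv.Perm.mul_apply, hπ₁ i, hπ₂ i]

private lemma perm_pattern {I : Type*} [Infinite I] {ι : Type*} [Finite ι]
    (A : Set I) (hA : A.Finite) (v w : ι → I)
    (hvA : ∀ i, v i ∉ A) (hwA : ∀ i, w i ∉ A)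
    (hpat : ∀ i j, v i = v j ↔ w i = w j) :
    ∃ π : Equiv.Perm I, (∀ a ∈ A, π a = a) ∧ ∀ i, π (v i) = w i := by
  classical
  cases nonempty_fintype ι
  set s : Finset I := Finset.univ.image v with hs
  let e := s.equivFin
  let vh : Fin s.card → I := fun k => (e.symm k : I)
  have hchoice : ∀ k : Fin s.card, ∃ i : ι, v i = vh k := by
    intro k
    have : (vh k) ∈ s := (e.symm k).2
    rw [hs, Finset.mem_image] at this
    obtain ⟨i, _, hi⟩ := this
    exact ⟨i, hi⟩
  let pick : Fin s.card → ι := fun k => (hchoice k).choose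
  have hpick : ∀ k, v (pick k) = vh k := fun k => (hchoice k).choose_spec
  let wh : Fin s.card → I := fun k => w (pick k)
  have hvh_inj : Function.Injective vh := fun k k' h =>
    e.symm.injective (Subtype.ext h)
  have hwh_inj : Function.Injective wh := by
    intro k k' h
    apply hvh_inj
    rw [← hpick, ← hpick]
    exact (hpat _ _).mpr h
  obtain ⟨π, hπA, hπ⟩ := perm_extend A hA vh wh hvh_inj hwh_inj
    (fun k => by rw [← hpick]; exact hvA _) (fun k => hwA _)
  refine ⟨π, hπA, ?_⟩
  intro i
  have hmem : v i ∈ s := by rw [hs]; exact Finset.mem_image_of_mem v (Finset.mem_univ i)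
  have hk : vh (e ⟨v i, hmem⟩) = v i := by
    show ((e.symm (e ⟨v i, hmem⟩)) : I) = v i
    rw [Equiv.symm_apply_apply]
  have := hπ (e ⟨v i, hmem⟩)
  rw [hk] at this
  rw [this]
  show w (pick _) = w i
  apply (hpat _ _).mp
  rw [hpick, hk]


private lemma fixes_inv {I : Type*} (π : Equiv.Perm I) (Q : Set I)
    (h : ∀ p ∈ Q, π p = p) : ∀ p ∈ Q, π⁻¹ p = p := by
  intro p hp
  conv_lhs => rw [← h p hp]
  exact (π.symm_apply_apply p : π⁻¹ (π p) = p)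

private lemma fixes_mem_iff {I : Type*} (π : Equiv.Perm I) (B : Set I)
    (h : ∀ p ∈ B, π p = p) (x : I) : π x ∈ B ↔ x ∈ B := by
  constructor
  · intro hx
    have := π.injective (h _ hx)
    rwa [← this]
  · intro hx
    rwa [h x hx]

private lemma image_comp_set {I : Type*} {m : ℕ} (δ : Set (Fin m → I))
    (π ρ : Equiv.Perm I) :
    (fun η => ⇑π ∘ η) '' ((fun η => ⇑ρ ∘ η) '' δ) = (fun η => ⇑(π * ρ) ∘ η) '' δ := by
  rw [Set.image_image]
  rfl

private lemma image_set_cancel {I : Type*} {m : ℕ} (δ : Set (Fin m → I))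
    (π : Equiv.Perm I) (η : Fin m → I) :
    ⇑π ∘ (⇑π⁻¹ ∘ η) = η := by
  funext x
  simp

private lemma image_pair_inv {I : Type*} {n m : ℕ}
    (σ : Set ((Fin n → I) × (Fin m → I))) (π : Equiv.Perm I)
    (h : ∀ q ∈ σ, ((⇑π ∘ q.1, ⇑π ∘ q.2) : (Fin n → I) × (Fin m → I)) ∈ σ)
    (h' : ∀ q ∈ σ, ((⇑π⁻¹ ∘ q.1, ⇑π⁻¹ ∘ q.2) : (Fin n → I) × (Fin m → I)) ∈ σ) :
    (fun q => (⇑π ∘ q.1, ⇑π ∘ q.2)) '' σ = σ := by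
  apply Set.Subset.antisymm
  · rintro _ ⟨q, hq, rfl⟩
    exact h q hq
  · intro q hq
    refine ⟨(⇑π⁻¹ ∘ q.1, ⇑π⁻¹ ∘ q.2), h' q hq, ?_⟩
    have e1 : ⇑π ∘ (⇑π⁻¹ ∘ q.1) = q.1 := by funext x; simp
    have e2 : ⇑π ∘ (⇑π⁻¹ ∘ q.2) = q.2 := by funext x; simp
    simp only [e1, e2]
private lemma core {I : Type*} [Infinite I] {n m : ℕ} (P : Set I)
    (R : (Fin n → I) → Set (Fin m → I) → Prop)
    (hinv : ∀ π : Equiv.Perm I, (∀ p ∈ P, π p = p) →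
      ∀ (ξ : Fin n → I) (δ : Set (Fin m → I)),
        (R ξ δ ↔ R (⇑π ∘ ξ) ((fun η => ⇑π ∘ η) '' δ)))
    (htotal : ∀ ξ : Fin n → I, ∃ δ : Set (Fin m → I), FinSuppSet δ ∧ R ξ δ)
    (B : Set I) (hB : B.Finite) (hPB : P ⊆ B) :
    ∃ (σ₁ : Set ((Fin n → I) × (Fin m → I))) (Q₁ : Set I)
      (Reach : Set (Fin n → I)),
      Q₁.Finite ∧ B ⊆ Q₁ ∧
      (∀ π : Equiv.Perm I, (∀ p ∈ Q₁, π p = p) →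
        (fun q => (⇑π ∘ q.1, ⇑π ∘ q.2)) '' σ₁ = σ₁) ∧
      (∀ π : Equiv.Perm I, (∀ p ∈ Q₁, π p = p) → ∀ ξ ∈ Reach, ⇑π ∘ ξ ∈ Reach) ∧
      (∀ ξ ∈ Reach, FinSuppSet {η | (ξ, η) ∈ σ₁} ∧ R ξ {η | (ξ, η) ∈ σ₁}) ∧
      (∀ q ∈ σ₁, q.1 ∈ Reach) ∧
      (∀ ξ : Fin n → I, ξ ∉ Reach → ∃ i, ξ i ∉ B ∧ ξ i ∈ Q₁) := by
  classical
  -- the "type" of a tuple relative to B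
  let T : (Fin n → I) → Set (Fin n × Fin n) × Set (Fin n × I) := fun ξ =>
    ({p | ξ p.1 = ξ p.2}, {q | q.2 ∈ B ∧ ξ q.1 = q.2})
  have hTpat : ∀ ξ ζ : Fin n → I, T ξ = T ζ → ∀ i j, ξ i = ξ j ↔ ζ i = ζ j := by
    intro ξ ζ h i j
    have := congrArg Prod.fst h
    exact Set.ext_iff.mp this (i, j)
  have hTb : ∀ ξ ζ : Fin n → I, T ξ = T ζ →
      ∀ i b, (b ∈ B ∧ ξ i = b) ↔ (b ∈ B ∧ ζ i = b) := by
    intro ξ ζ h i b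
    have := congrArg Prod.snd h
    exact Set.ext_iff.mp this (i, b)
  have hTinv : ∀ π : Equiv.Perm I, (∀ p ∈ B, π p = p) →
      ∀ ξ : Fin n → I, T (⇑π ∘ ξ) = T ξ := by
    intro π hπ ξ
    have h1 : {p : Fin n × Fin n | π (ξ p.1) = π (ξ p.2)} = {p | ξ p.1 = ξ p.2} := by
      ext p
      exact π.injective.eq_iff
    have h2 : {q : Fin n × I | q.2 ∈ B ∧ π (ξ q.1) = q.2} =
        {q | q.2 ∈ B ∧ ξ q.1 = q.2} := by
      ext q
      simp only [Set.mem_setOf_eq, and_congr_right_iff]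
      intro hb
      constructor
      · intro hx
        have : π (ξ q.1) = π q.2 := by rw [hx, hπ q.2 hb]
        exact π.injective this
      · intro hx
        rw [hx, hπ q.2 hb]
    exact Prod.ext h1 h2
  have hTfin : (Set.range T).Finite := by
    have h2 : {s : Set (Fin n × I) | s ⊆ (Set.univ : Set (Fin n)) ×ˢ B}.Finite :=
      Set.Finite.finite_subsets (Set.Finite.prod Set.finite_univ hB)
    refine (Set.Finite.prod (Set.finite_univ) h2).subset ?_
    rintro _ ⟨ξ, rfl⟩
    refine ⟨trivial, ?_⟩
    rintro ⟨i, b⟩ ⟨hb, _⟩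
    exact ⟨trivial, hb⟩
  haveI : Finite ↥(Set.range T) := hTfin.to_subtype
  -- choice of orbit representatives, witnesses and supports
  let rep : Set.range T → (Fin n → I) := fun t => t.2.choose
  have hrep : ∀ t : Set.range T, T (rep t) = (t : Set (Fin n × Fin n) × Set (Fin n × I)) :=
    fun t => t.2.choose_spec
  let δf : Set.range T → Set (Fin m → I) := fun t => (htotal (rep t)).choose
  have hδf : ∀ t, FinSuppSet (δf t) ∧ R (rep t) (δf t) :=
    fun t => (htotal (rep t)).choose_spec
  let Qf : Set.range T → Set I := fun t => (hδf t).1.choose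
  have hQf : ∀ t, (Qf t).Finite ∧ ∀ π : Equiv.Perm I, (∀ p ∈ Qf t, π p = p) →
      (fun η => ⇑π ∘ η) '' δf t = δf t := fun t => (hδf t).1.choose_spec
  -- the global support and the constructed relation
  refine ⟨{q | ∃ (t : Set.range T) (π : Equiv.Perm I),
      (∀ p ∈ B ∪ (Qf t \ Set.range (rep t)), π p = p) ∧
      q.1 = ⇑π ∘ rep t ∧ q.2 ∈ (fun η => ⇑π ∘ η) '' δf t},
    B ∪ ⋃ t : Set.range T, (Qf t ∪ Set.range (rep t)),
    {ξ | ∃ (t : Set.range T) (π : Equiv.Perm I),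
      (∀ p ∈ B ∪ (Qf t \ Set.range (rep t)), π p = p) ∧ ξ = ⇑π ∘ rep t},
    ?_, ?_, ?_, ?_, ?_, ?_, ?_⟩
  · exact hB.union (Set.finite_iUnion fun t =>
      ((hQf t).1.union (Set.finite_range (rep t))))
  · exact Set.subset_union_left
  -- invariance of σ₁
  · intro ρ hρ
    have hρ' : ∀ ρ : Equiv.Perm I,
        (∀ p ∈ B ∪ ⋃ t : Set.range T, (Qf t ∪ Set.range (rep t)), ρ p = p) →
        ∀ q ∈ {q : (Fin n → I) × (Fin m → I) | ∃ (t : Set.range T) (π : Equiv.Perm I),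
          (∀ p ∈ B ∪ (Qf t \ Set.range (rep t)), π p = p) ∧
          q.1 = ⇑π ∘ rep t ∧ q.2 ∈ (fun η => ⇑π ∘ η) '' δf t},
          ((⇑ρ ∘ q.1, ⇑ρ ∘ q.2) : (Fin n → I) × (Fin m → I)) ∈
          {q | ∃ (t : Set.range T) (π : Equiv.Perm I),
          (∀ p ∈ B ∪ (Qf t \ Set.range (rep t)), π p = p) ∧
          q.1 = ⇑π ∘ rep t ∧ q.2 ∈ (fun η => ⇑π ∘ η) '' δf t} := by
      intro ρ hρ q hq
      obtain ⟨t, π, hπ, h1, h2⟩ := hq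
      have hfix : ∀ p ∈ B ∪ (Qf t \ Set.range (rep t)), (ρ * π) p = p := by
        intro p hp
        rw [Equiv.Perm.mul_apply, hπ p hp]
        apply hρ
        rcases hp with hp | hp
        · exact Or.inl hp
        · exact Or.inr (Set.mem_iUnion.mpr ⟨t, Or.inl hp.1⟩)
      refine ⟨t, ρ * π, hfix, ?_, ?_⟩
      · rw [h1]; rfl
      · rw [← image_comp_set]
        exact Set.mem_image_of_mem _ h2
    apply image_pair_inv
    · exact hρ' ρ hρ
    · exact hρ' ρ⁻¹ (fixes_inv ρ _ hρ)
  -- invariance of Reach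
  · intro ρ hρ ξ hξ
    obtain ⟨t, π, hπ, rfl⟩ := hξ
    refine ⟨t, ρ * π, ?_, rfl⟩
    intro p hp
    rw [Equiv.Perm.mul_apply, hπ p hp]
    apply hρ
    rcases hp with hp | hp
    · exact Or.inl hp
    · exact Or.inr (Set.mem_iUnion.mpr ⟨t, Or.inl hp.1⟩)
  -- slices over Reach
  · rintro ξ ⟨t, π, hπ, rfl⟩
    have hπB : ∀ p ∈ B, π p = p := fun p hp => hπ p (Or.inl hp)
    have hslice : {η | ((⇑π ∘ rep t, η) : (Fin n → I) × (Fin m → I)) ∈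
        {q | ∃ (t : Set.range T) (π : Equiv.Perm I),
          (∀ p ∈ B ∪ (Qf t \ Set.range (rep t)), π p = p) ∧
          q.1 = ⇑π ∘ rep t ∧ q.2 ∈ (fun η => ⇑π ∘ η) '' δf t}} =
        (fun η => ⇑π ∘ η) '' δf t := by
      ext η
      constructor
      · rintro ⟨t', π', hπ', h1, h2⟩
        have hπ'B : ∀ p ∈ B, π' p = p := fun p hp => hπ' p (Or.inl hp)
        have h1' : ⇑π ∘ rep t = ⇑π' ∘ rep t' := h1
        have h2' : η ∈ (fun η => ⇑π' ∘ η) '' δf t' := h2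
        have ht' : t = t' := by
          apply Subtype.ext
          rw [← hrep t, ← hrep t', ← hTinv π hπB (rep t), ← hTinv π' hπ'B (rep t'), h1']
        subst ht'
        replace h1 := h1'
        replace h2 := h2'
        have hfix : ∀ p ∈ Qf t, (π⁻¹ * π') p = p := by
          intro p hp
          by_cases hr : p ∈ Set.range (rep t)
          · obtain ⟨i, rfl⟩ := hr
            rw [Equiv.Perm.mul_apply]
            have : π' (rep t i) = π (rep t i) := (congrFun h1 i).symm
            rw [this]; exact π.symm_apply_apply _
          · rw [Equiv.Perm.mul_apply, hπ' p (Or.inr ⟨hp, hr⟩)]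
            exact fixes_inv π _ hπ p (Or.inr ⟨hp, hr⟩)
        have hδeq : (fun η => ⇑(π⁻¹ * π') ∘ η) '' δf t = δf t := (hQf t).2 _ hfix
        have heq : (fun η => ⇑π' ∘ η) '' δf t = (fun η => ⇑π ∘ η) '' δf t := by
          have hpp : π * (π⁻¹ * π') = π' := by group
          calc (fun η => ⇑π' ∘ η) '' δf t
              = (fun η => ⇑(π * (π⁻¹ * π')) ∘ η) '' δf t := by rw [hpp]
            _ = (fun η => ⇑π ∘ η) '' ((fun η => ⇑(π⁻¹ * π') ∘ η) '' δf t) :=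
                (image_comp_set _ _ _).symm
            _ = (fun η => ⇑π ∘ η) '' δf t := by rw [hδeq]
        rwa [heq] at h2
      · intro h
        exact ⟨t, π, hπ, rfl, h⟩
    rw [hslice]
    constructor
    · -- finite support of the slice
      refine ⟨⇑π '' Qf t, (hQf t).1.image _, ?_⟩
      intro ρ hρ
      have hfix : ∀ p ∈ Qf t, (π⁻¹ * ρ * π) p = p := by
        intro p hp
        have : ρ (π p) = π p := hρ _ (Set.mem_image_of_mem _ hp)
        rw [Equiv.Perm.mul_apply, Equiv.Perm.mul_apply, this]; exact π.symm_apply_apply _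
      calc (fun η => ⇑ρ ∘ η) '' ((fun η => ⇑π ∘ η) '' δf t)
          = (fun η => ⇑(ρ * π) ∘ η) '' δf t := image_comp_set _ _ _
        _ = (fun η => ⇑(π * (π⁻¹ * ρ * π)) ∘ η) '' δf t := by congr 1; group
        _ = (fun η => ⇑π ∘ η) '' ((fun η => ⇑(π⁻¹ * ρ * π) ∘ η) '' δf t) :=
            (image_comp_set _ _ _).symm
        _ = (fun η => ⇑π ∘ η) '' δf t := by rw [(hQf t).2 _ hfix]
    · exact (hinv π (fun p hp => hπB p (hPB hp)) (rep t) (δf t)).mp (hδf t).2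
  -- σ₁ only contains reachable first components
  · rintro q ⟨t, π, hπ, h1, _⟩
    exact ⟨t, π, hπ, h1⟩
  -- unreachable tuples meet Q₁ outside B
  · intro ξ hξ
    by_contra hcon
    push_neg at hcon
    apply hξ
    have htmem : T ξ ∈ Set.range T := ⟨ξ, rfl⟩
    set t : Set.range T := ⟨T ξ, htmem⟩ with ht
    have hrt : T (rep t) = T ξ := hrep t
    have hbv := hTb _ _ hrt
    have hpat := hTpat _ _ hrt
    have hAfin : (B ∪ (Qf t \ Set.range (rep t))).Finite :=
      hB.union ((hQf t).1.diff)
    have hQsub : Qf t ⊆ B ∪ ⋃ t' : Set.range T, (Qf t' ∪ Set.range (rep t')) :=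
      fun x hx => Or.inr (Set.mem_iUnion.mpr ⟨t, Or.inl hx⟩)
    have hwB : ∀ i : Fin n, rep t i ∉ B → ξ i ∉ B := by
      intro i hi hcontra
      apply hi
      rw [((hbv i (ξ i)).mpr ⟨hcontra, rfl⟩).2]
      exact hcontra
    obtain ⟨π, hπA, hπv⟩ := perm_pattern (B ∪ (Qf t \ Set.range (rep t))) hAfin
      (fun i : {i : Fin n // rep t i ∉ B} => rep t i)
      (fun i : {i : Fin n // rep t i ∉ B} => ξ i)
      (by
        rintro ⟨i, hi⟩ (h | h)
        · exact hi h
        · exact h.2 ⟨i, rfl⟩)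
      (by
        rintro ⟨i, hi⟩ (h | h)
        · exact hwB i hi h
        · exact hcon i (hwB i hi) (hQsub h.1))
      (by
        rintro ⟨i, _⟩ ⟨j, _⟩
        exact hpat i j)
    refine ⟨t, π, hπA, ?_⟩
    funext i
    by_cases hi : rep t i ∈ B
    · have : ξ i = rep t i := ((hbv i (rep t i)).mp ⟨hi, rfl⟩).2
      show ξ i = π (rep t i)
      rw [hπA (rep t i) (Or.inl hi), this]
    · exact (hπv ⟨i, hi⟩).symm
private lemma buildS {I : Type*} [Infinite I] {n m : ℕ} (P : Set I)
    (R : (Fin n → I) → Set (Fin m → I) → Prop)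
    (hinv : ∀ π : Equiv.Perm I, (∀ p ∈ P, π p = p) →
      ∀ (ξ : Fin n → I) (δ : Set (Fin m → I)),
        (R ξ δ ↔ R (⇑π ∘ ξ) ((fun η => ⇑π ∘ η) '' δ)))
    (htotal : ∀ ξ : Fin n → I, ∃ δ : Set (Fin m → I), FinSuppSet δ ∧ R ξ δ) :
    ∀ (k : ℕ) (B : Set I), B.Finite → P ⊆ B →
    ∃ (σ : Set ((Fin n → I) × (Fin m → I))) (Q : Set I),
      Q.Finite ∧ B ⊆ Q ∧
      (∀ π : Equiv.Perm I, (∀ p ∈ Q, π p = p) →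
        (fun q => (⇑π ∘ q.1, ⇑π ∘ q.2)) '' σ = σ) ∧
      ∀ ξ : Fin n → I, {i | ξ i ∉ B}.ncard ≤ k →
        FinSuppSet {η | (ξ, η) ∈ σ} ∧ R ξ {η | (ξ, η) ∈ σ} := by
  intro k
  induction k with
  | zero =>
    intro B hB hPB
    obtain ⟨σ₁, Q₁, Reach, hQ₁fin, hBQ₁, hσinv, hRinv, hslice, hfst, hmiss⟩ :=
      core P R hinv htotal B hB hPB
    refine ⟨σ₁, Q₁, hQ₁fin, hBQ₁, hσinv, ?_⟩
    intro ξ hξ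
    have hempty : {i | ξ i ∉ B} = ∅ := by
      rw [← Set.ncard_eq_zero (Set.toFinite _)]
      omega
    have hreach : ξ ∈ Reach := by
      by_contra hc
      obtain ⟨i, hi, _⟩ := hmiss ξ hc
      exact absurd hempty (Set.nonempty_iff_ne_empty.mp ⟨i, hi⟩)
    exact hslice ξ hreach
  | succ k ih =>
    intro B hB hPB
    obtain ⟨σ₁, Q₁, Reach, hQ₁fin, hBQ₁, hσinv, hRinv, hslice, hfst, hmiss⟩ :=
      core P R hinv htotal B hB hPB
    obtain ⟨σ₂, Q₂, hQ₂fin, hQ₁Q₂, hσ₂inv, hslice₂⟩ := ih Q₁ hQ₁fin (hPB.trans hBQ₁)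
    refine ⟨σ₁ ∪ {q | q ∈ σ₂ ∧ q.1 ∉ Reach}, Q₂, hQ₂fin, hBQ₁.trans hQ₁Q₂, ?_, ?_⟩
    · -- invariance
      intro ρ hρ
      have key : ∀ ρ : Equiv.Perm I, (∀ p ∈ Q₂, ρ p = p) →
          ∀ q ∈ σ₁ ∪ {q | q ∈ σ₂ ∧ q.1 ∉ Reach},
          ((⇑ρ ∘ q.1, ⇑ρ ∘ q.2) : (Fin n → I) × (Fin m → I)) ∈
            σ₁ ∪ {q | q ∈ σ₂ ∧ q.1 ∉ Reach} := by
        intro ρ hρ q hq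
        have hρ₁ : ∀ p ∈ Q₁, ρ p = p := fun p hp => hρ p (hQ₁Q₂ hp)
        rcases hq with hq | ⟨hq, hr⟩
        · left
          rw [← hσinv ρ hρ₁]
          exact Set.mem_image_of_mem _ hq
        · right
          constructor
          · rw [← hσ₂inv ρ hρ]
            exact Set.mem_image_of_mem _ hq
          · intro hc
            apply hr
            have := hRinv ρ⁻¹ (fixes_inv ρ _ hρ₁) _ hc
            have he : ⇑ρ⁻¹ ∘ (⇑ρ ∘ q.1) = q.1 := by funext x; simp
            rwa [he] at this
      apply image_pair_inv
      · exact key ρ hρ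
      · exact key ρ⁻¹ (fixes_inv ρ _ hρ)
    · -- slices
      intro ξ hξ
      by_cases hreach : ξ ∈ Reach
      · have heq : {η | (ξ, η) ∈ σ₁ ∪ {q | q ∈ σ₂ ∧ q.1 ∉ Reach}} = {η | (ξ, η) ∈ σ₁} := by
          ext η
          constructor
          · rintro (h | ⟨_, hr⟩)
            · exact h
            · exact absurd hreach hr
          · exact fun h => Or.inl h
        rw [heq]
        exact hslice ξ hreach
      · have heq : {η | (ξ, η) ∈ σ₁ ∪ {q | q ∈ σ₂ ∧ q.1 ∉ Reach}} = {η | (ξ, η) ∈ σ₂} := by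
          ext η
          constructor
          · rintro (h | ⟨h, _⟩)
            · exact absurd (hfst _ h) hreach
            · exact h
          · exact fun h => Or.inr ⟨h, hreach⟩
        rw [heq]
        apply hslice₂
        obtain ⟨i₀, hi₀B, hi₀Q⟩ := hmiss ξ hreach
        have hss : {i | ξ i ∉ Q₁} ⊂ {i | ξ i ∉ B} := by
          constructor
          · intro i hi
            exact fun hc => hi (hBQ₁ hc)
          · intro hc
            exact (hc hi₀B) hi₀Q
        have := Set.ncard_lt_ncard hss (Set.toFinite _)
        omega

/-- The Ackermann choice axiom holds in the basic Fraenkel model of second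
order: if `R` is a relation between `n`-tuples and sets of `m`-tuples that is
invariant under the pointwise stabilizer of a finite set `P`, and every tuple
`ξ` admits a finitely supported `δ` with `R ξ δ`, then there is a finitely
supported relation `σ` whose slices are finitely supported and satisfy `R`. -/
theorem ackermann_choice_in_basic_fraenkel_model {I : Type*} [Infinite I]
    (n m : ℕ) (hn : 1 ≤ n) (hm : 1 ≤ m) (P : Set I) (hP : P.Finite)
    (R : (Fin n → I) → Set (Fin m → I) → Prop)
    (hinv : ∀ π : Equiv.Perm I, (∀ p ∈ P, π p = p) →
      ∀ (ξ : Fin n → I) (δ : Set (Fin m → I)),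
        (R ξ δ ↔ R (⇑π ∘ ξ) ((fun η => ⇑π ∘ η) '' δ)))
    (htotal : ∀ ξ : Fin n → I, ∃ δ : Set (Fin m → I), FinSuppSet δ ∧ R ξ δ) :
    ∃ σ : Set ((Fin n → I) × (Fin m → I)), FinSuppRel σ ∧
      ∀ ξ : Fin n → I,
        FinSuppSet {η | (ξ, η) ∈ σ} ∧ R ξ {η | (ξ, η) ∈ σ} := by
  obtain ⟨σ, Q, hQfin, _, hinvQ, hsl⟩ := buildS P R hinv htotal n P hP subset_rfl
  refine ⟨σ, ⟨Q, hQfin, hinvQ⟩, ?_⟩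
  intro ξ
  apply hsl
  calc {i | ξ i ∉ P}.ncard ≤ (Set.univ : Set (Fin n)).ncard :=
        Set.ncard_le_ncard (Set.subset_univ _) Set.finite_univ
    _ = n := by rw [Set.ncard_univ, Nat.card_eq_fintype_card, Fintype.card_fin]
end

section
/- Let I be an infinite set, n, m ≥ 1, and let ρ ⊆ (Fin n → I) × (Fin m → I) be a relation that is finitely supported with respect to the diagonal action of permutations of I and total, i.e. for every ξ : Fin n → I there exists η : Fin m → I with (ξ, η) ∈ ρ. Then there exists a relation σ ⊆ ρ that is finitely supported with respect to the diagonal action and such that for every ξ : Fin n → I there is exactly one η with (ξ, η) ∈ σ. -/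
namespace AsserAux

noncomputable section

variable {I : Type*}

/-- Index of the first coordinate of `ξ` equal to `x`. -/
def fi (n : ℕ) (ξ : Fin n → I) (x : I) : ℕ := sInf {i | ∃ h : i < n, ξ ⟨i, h⟩ = x}

/-- Index of the first coordinate of `η` equal to `η j`. -/
def fo (m : ℕ) (η : Fin m → I) (j : Fin m) : ℕ := sInf {j' | ∃ h : j' < m, η ⟨j', h⟩ = η j}

lemma fi_mem {n : ℕ} {ξ : Fin n → I} {x : I} (h : ∃ i, ξ i = x) :
    ∃ hlt : fi n ξ x < n, ξ ⟨fi n ξ x, hlt⟩ = x := by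
  obtain ⟨i, hi⟩ := h
  exact Nat.sInf_mem (⟨i.1, i.2, by simpa using hi⟩ : Set.Nonempty {i | ∃ h : i < n, ξ ⟨i, h⟩ = x})

lemma fo_mem {m : ℕ} (η : Fin m → I) (j : Fin m) :
    ∃ hlt : fo m η j < m, η ⟨fo m η j, hlt⟩ = η j :=
  Nat.sInf_mem (⟨j.1, j.2, by simp⟩ :
    Set.Nonempty {j' | ∃ h : j' < m, η ⟨j', h⟩ = η j})

lemma fo_congr {m : ℕ} {η : Fin m → I} {j j' : Fin m} (h : η j = η j') :
    fo m η j = fo m η j' := by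
  unfold fo; rw [h]

open Classical in
/-- The "pattern code" of `η` relative to `ξ`, `Q` and the enumeration `L` of `Q`. -/
def code (n m : ℕ) (Q : Set I) (L : List I) (ξ : Fin n → I) (η : Fin m → I) (j : Fin m) : ℕ :=
  if ∃ i, ξ i = η j then fi n ξ (η j)
  else if η j ∈ Q then n + m + L.idxOf (η j)
  else n + fo m η j

/-- The predicate whose `Nat.nth` enumerates indices of "fresh" atoms. -/
def freshp (n m : ℕ) (b : ℕ → I) (ξ : Fin n → I) (s : ℕ) : Prop :=
  b s ∉ Set.range ξ ∨ n + m ≤ s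

/-- The `t`-th fresh atom for `ξ`. -/
def fresh (n m : ℕ) (b : ℕ → I) (ξ : Fin n → I) (t : ℕ) : I :=
  b (Nat.nth (freshp n m b ξ) t)

/-- Number of "new-representative" positions of a code strictly below `r`. -/
def numNew (n : ℕ) {m : ℕ} (c : Fin m → ℕ) (r : Fin m) : ℕ :=
  (Finset.univ.filter fun r' : Fin m => (r' : ℕ) < (r : ℕ) ∧ c r' = n + (r' : ℕ)).card

/-- Decoding a pattern code into a canonical tuple. -/
def decode (n m : ℕ) (L : List I) (b : ℕ → I) (ξ : Fin n → I) (c : Fin m → ℕ) (j : Fin m) : I :=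
  if h1 : c j < n then ξ ⟨c j, h1⟩
  else if h2 : c j < n + m then fresh n m b ξ (numNew n c ⟨c j - n, by omega⟩)
  else L.getD (c j - n - m) (b 0)

section lemmas

variable {n m : ℕ} {Q : Set I} {L : List I} {b : ℕ → I}

lemma freshp_infinite (ξ : Fin n → I) : (setOf (freshp n m b ξ)).Infinite :=
  Set.Infinite.mono (fun s hs => Or.inr hs) (Set.Ici_infinite (n + m))

lemma nth_freshp_lt (hb : Function.Injective b) (ξ : Fin n → I) {t : ℕ} (ht : t < m) :
    Nat.nth (freshp n m b ξ) t < n + m := by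
  classical
  apply Nat.nth_lt_of_lt_count
  rw [Nat.count_eq_card_filter_range]
  have hsplit := Finset.card_filter_add_card_filter_not
    (s := Finset.range (n + m)) (p := fun x => freshp n m b ξ x)
  have hbad : ((Finset.range (n + m)).filter fun s => ¬ freshp n m b ξ s).card ≤ n := by
    have hmem : ∀ s ∈ (Finset.range (n + m)).filter fun s => ¬ freshp n m b ξ s,
        fi n ξ (b s) ∈ Finset.range n := by
      intro s hs
      simp only [Finset.mem_filter, Finset.mem_range, freshp, not_or, not_le,
        not_not] at hs
      obtain ⟨hs1, hs2, _⟩ := hs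
      obtain ⟨hlt, _⟩ := fi_mem (x := b s) (by simpa [Set.mem_range, eq_comm] using hs2)
      simpa using hlt
    refine le_trans (Finset.card_le_card_of_injOn (fun s => fi n ξ (b s)) hmem ?_) (by simp)
    intro s hs s' hs' hss
    simp only [Finset.coe_filter, Set.mem_setOf_eq, Finset.mem_range, freshp, not_or, not_le,
      not_not] at hs hs'
    obtain ⟨hlt, heq⟩ := fi_mem (x := b s) (by simpa [Set.mem_range, eq_comm] using hs.2.1)
    obtain ⟨hlt', heq'⟩ := fi_mem (x := b s') (by simpa [Set.mem_range, eq_comm] using hs'.2.1)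
    apply hb
    rw [← heq, ← heq']
    congr 1
    exact Fin.ext hss
  have hrange : (Finset.range (n + m)).card = n + m := Finset.card_range _
  omega

lemma fresh_not_mem_range (hb : Function.Injective b) (ξ : Fin n → I) {t : ℕ} (ht : t < m) :
    fresh n m b ξ t ∉ Set.range ξ := by
  have hmem := Nat.nth_mem_of_infinite (p := freshp n m b ξ)
    (freshp_infinite (m := m) (b := b) ξ) t
  rcases hmem with h | h
  · exact h
  · exact absurd (nth_freshp_lt hb ξ ht) (by omega)

lemma fresh_inj (hb : Function.Injective b) (ξ : Fin n → I) {t t' : ℕ} (hne : t ≠ t') :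
    fresh n m b ξ t ≠ fresh n m b ξ t' := fun h =>
  hne (Nat.nth_injective (p := freshp n m b ξ) (freshp_infinite (m := m) (b := b) ξ) (hb h))

lemma fresh_mem_bimage (hb : Function.Injective b) (ξ : Fin n → I) {t : ℕ} (ht : t < m) :
    fresh n m b ξ t ∈ b '' Set.Iio (n + m) :=
  ⟨_, nth_freshp_lt hb ξ ht, rfl⟩

lemma freshp_perm (π : Equiv.Perm I) (hπ : ∀ x ∈ Q ∪ b '' Set.Iio (n + m), π x = x)
    (ξ : Fin n → I) : freshp n m b (⇑π ∘ ξ) = freshp n m b ξ := by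
  funext s
  unfold freshp
  by_cases hs : n + m ≤ s
  · simp [hs]
  · have hfix : π (b s) = b s := hπ _ (Or.inr ⟨s, Set.mem_Iio.mpr (by omega), rfl⟩)
    apply propext
    constructor
    · rintro (h | h)
      · refine Or.inl fun ⟨i, hi⟩ => h ⟨i, ?_⟩
        simp only [Function.comp_apply]
        rw [hi, hfix]
      · exact Or.inr h
    · rintro (h | h)
      · refine Or.inl fun ⟨i, hi⟩ => h ⟨i, ?_⟩
        simp only [Function.comp_apply] at hi
        have : π (ξ i) = π (b s) := by rw [hi, hfix]
        exact π.injective this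
      · exact Or.inr h

lemma fresh_perm (π : Equiv.Perm I) (hπ : ∀ x ∈ Q ∪ b '' Set.Iio (n + m), π x = x)
    (ξ : Fin n → I) (t : ℕ) : fresh n m b (⇑π ∘ ξ) t = fresh n m b ξ t := by
  unfold fresh
  rw [freshp_perm (Q := Q) π hπ ξ]

lemma fresh_fixed (hb : Function.Injective b) (π : Equiv.Perm I)
    (hπ : ∀ x ∈ Q ∪ b '' Set.Iio (n + m), π x = x) (ξ : Fin n → I) {t : ℕ} (ht : t < m) :
    π (fresh n m b ξ t) = fresh n m b ξ t :=
  hπ _ (Or.inr (fresh_mem_bimage hb ξ ht))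

lemma numNew_lt (c : Fin m → ℕ) (r : Fin m) : numNew n c r < m := by
  have hss : (Finset.univ.filter fun r' : Fin m => (r' : ℕ) < (r : ℕ) ∧ c r' = n + (r' : ℕ))
      ⊂ Finset.univ := by
    rw [Finset.ssubset_univ_iff]
    intro h
    have : r ∈ Finset.univ.filter fun r' : Fin m => (r' : ℕ) < (r : ℕ) ∧ c r' = n + (r' : ℕ) := by
      rw [h]; exact Finset.mem_univ r
    simp at this
  have := Finset.card_lt_card hss
  simpa [numNew] using this

lemma numNew_strictMono {c : Fin m → ℕ} {r r' : Fin m} (h : r < r') (hr : c r = n + (r : ℕ)) :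
    numNew n c r < numNew n c r' := by
  apply Finset.card_lt_card
  constructor
  · intro x hx
    simp only [Finset.mem_filter, Finset.mem_univ, true_and] at hx ⊢
    exact ⟨lt_trans hx.1 h, hx.2⟩
  · intro hsub
    have : r ∈ Finset.univ.filter fun x : Fin m => (x : ℕ) < (r' : ℕ) ∧ c x = n + (x : ℕ) := by
      simp only [Finset.mem_filter, Finset.mem_univ, true_and]
      exact ⟨h, hr⟩
    have := hsub this
    simp at this

open Classical in
lemma code_perm (π : Equiv.Perm I) (hπ : ∀ p ∈ Q, π p = p) (ξ : Fin n → I) (η : Fin m → I) :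
    code n m Q L (⇑π ∘ ξ) (⇑π ∘ η) = code n m Q L ξ η := by
  funext j
  have hmemQ : π (η j) ∈ Q ↔ η j ∈ Q := by
    constructor
    · intro h
      have := hπ _ h
      have : π (η j) = η j := π.injective this
      rwa [← this]
    · intro h
      rwa [hπ _ h]
  have hfixQ : η j ∈ Q → π (η j) = η j := fun h => hπ _ h
  have hex : (∃ i, (⇑π ∘ ξ) i = (⇑π ∘ η) j) ↔ ∃ i, ξ i = η j :=
    exists_congr fun i => by simp only [Function.comp_apply]; exact π.injective.eq_iff
  unfold code
  by_cases h1 : ∃ i, ξ i = η j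
  · rw [if_pos h1, if_pos (hex.mpr h1)]
    unfold fi
    congr 1
    ext i
    simp only [Set.mem_setOf_eq, Function.comp_apply]
    exact exists_congr fun h => π.injective.eq_iff
  · rw [if_neg h1, if_neg (fun h => h1 (hex.mp h))]
    by_cases h2 : η j ∈ Q
    · rw [if_pos h2, if_pos (by simpa only [Function.comp_apply, hmemQ] using h2)]
      simp only [Function.comp_apply, hfixQ h2]
    · rw [if_neg h2, if_neg (by simpa only [Function.comp_apply, hmemQ] using h2)]
      congr 1
      unfold fo
      congr 1
      ext j'
      simp only [Set.mem_setOf_eq, Function.comp_apply]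
      exact exists_congr fun h => π.injective.eq_iff

lemma decode_perm (hb : Function.Injective b) (hQL : ∀ x, x ∈ L ↔ x ∈ Q) (hm : 0 < m)
    (π : Equiv.Perm I) (hπ : ∀ x ∈ Q ∪ b '' Set.Iio (n + m), π x = x)
    (ξ : Fin n → I) (c : Fin m → ℕ) :
    decode n m L b (⇑π ∘ ξ) c = ⇑π ∘ decode n m L b ξ c := by
  funext j
  simp only [Function.comp_apply]
  unfold decode
  split_ifs with h1 h2
  · simp
  · rw [fresh_perm (Q := Q) π hπ, fresh_fixed (Q := Q) hb π hπ ξ (numNew_lt c _)]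
  · by_cases hlen : c j - n - m < L.length
    · have hmem : L.getD (c j - n - m) (b 0) ∈ Q := by
        rw [List.getD_eq_getElem L _ hlen]
        exact (hQL _).mp (List.getElem_mem hlen)
      exact (hπ _ (Or.inl hmem)).symm
    · rw [List.getD_eq_default L _ (by omega)]
      exact (hπ _ (Or.inr ⟨0, Set.mem_Iio.mpr (by omega), rfl⟩)).symm

lemma exists_perm_special :
    ∀ (t : ℕ) (A : Set I) (v w : Fin t → I), Function.Injective v → Function.Injective w →
      (∀ s, v s ∉ A) → (∀ s, w s ∉ A) → (∀ s s', w s ≠ v s') →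
      ∃ π : Equiv.Perm I, (∀ a ∈ A, π a = a) ∧ ∀ s, π (v s) = w s := by
  intro t
  induction t with
  | zero =>
    intro A v w _ _ _ _ _
    exact ⟨1, fun a _ => rfl, fun s => s.elim0⟩
  | succ t ih =>
    intro A v w hv hw hvA hwA hd
    classical
    set vl := v (Fin.last t) with hvl
    set wl := w (Fin.last t) with hwl
    have hcast : ∀ s : Fin t, Fin.castSucc s ≠ Fin.last t := fun s =>
      (Fin.castSucc_lt_last s).ne
    obtain ⟨π', hπ'A, hπ'v⟩ := ih (A ∪ {vl, wl}) (v ∘ Fin.castSucc) (w ∘ Fin.castSucc)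
      (hv.comp (Fin.castSucc_injective t)) (hw.comp (Fin.castSucc_injective t))
      (by
        intro s
        simp only [Function.comp_apply, Set.mem_union, Set.mem_insert_iff,
          Set.mem_singleton_iff, not_or]
        exact ⟨hvA _, fun h => (hcast s) (hv h), fun h => hd (Fin.last t) s.castSucc h.symm⟩)
      (by
        intro s
        simp only [Function.comp_apply, Set.mem_union, Set.mem_insert_iff,
          Set.mem_singleton_iff, not_or]
        exact ⟨hwA _, fun h => hd s.castSucc (Fin.last t) h, fun h => (hcast s) (hw h)⟩)
      (fun s s' => hd _ _)
    refine ⟨π'.trans (Equiv.swap vl wl), ?_, ?_⟩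
    · intro a ha
      have h1 : π' a = a := hπ'A a (Or.inl ha)
      have h2 : a ≠ vl := fun h => hvA _ (h ▸ ha)
      have h3 : a ≠ wl := fun h => hwA _ (h ▸ ha)
      simp [Equiv.trans_apply, h1, Equiv.swap_apply_of_ne_of_ne h2 h3]
    · intro s
      refine Fin.lastCases ?_ ?_ s
      · have h1 : π' vl = vl := hπ'A _ (Or.inr (Or.inl rfl))
        simp [Equiv.trans_apply, ← hvl, ← hwl, h1, Equiv.swap_apply_left]
      · intro s'
        have h1 : π' (v s'.castSucc) = w s'.castSucc := hπ'v s'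
        have h2 : w s'.castSucc ≠ vl := hd _ _
        have h3 : w s'.castSucc ≠ wl := fun h => (hcast s') (hw h)
        simp [Equiv.trans_apply, h1, Equiv.swap_apply_of_ne_of_ne h2 h3]

lemma exists_perm [Infinite I] (A : Set I) (hA : A.Finite) {κ : Type*} [Fintype κ]
    (v w : κ → I) (hv : Function.Injective v) (hw : Function.Injective w)
    (hvA : ∀ s, v s ∉ A) (hwA : ∀ s, w s ∉ A) :
    ∃ π : Equiv.Perm I, (∀ a ∈ A, π a = a) ∧ ∀ s, π (v s) = w s := by
  classical
  set t := Fintype.card κ with ht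
  set e := Fintype.equivFin κ with he
  set S : Set I := A ∪ Set.range v ∪ Set.range w with hS
  have hSfin : S.Finite := ((hA.union (Set.finite_range v)).union (Set.finite_range w))
  have hScinf : Sᶜ.Infinite := hSfin.infinite_compl
  set u : Fin t → I := fun s => (hScinf.natEmbedding _ (s : ℕ) : I) with hu
  have hu_inj : Function.Injective u := fun s s' h =>
    Fin.ext ((hScinf.natEmbedding _).injective (Subtype.ext h))
  have hu_not : ∀ s, u s ∉ S := fun s => (hScinf.natEmbedding _ (s : ℕ)).2
  obtain ⟨π₁, hπ₁A, hπ₁⟩ := exists_perm_special t A (v ∘ e.symm) u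
    (hv.comp e.symm.injective) hu_inj (fun s => hvA _)
    (fun s => fun h => hu_not s (Or.inl (Or.inl h)))
    (fun s s' h => hu_not s (Or.inl (Or.inr ⟨e.symm s', h.symm⟩)))
  obtain ⟨π₂, hπ₂A, hπ₂⟩ := exists_perm_special t A u (w ∘ e.symm) hu_inj
    (hw.comp e.symm.injective)
    (fun s => fun h => hu_not s (Or.inl (Or.inl h)))
    (fun s => hwA _)
    (fun s s' h => hu_not s' (Or.inr ⟨e.symm s, h⟩))
  refine ⟨π₁.trans π₂, fun a ha => ?_, fun s => ?_⟩
  · simp [Equiv.trans_apply, hπ₁A a ha, hπ₂A a ha]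
  · have h1 : π₁ (v s) = u (e s) := by
      have := hπ₁ (e s)
      simpa using this
    have h2 : π₂ (u (e s)) = w s := by
      have := hπ₂ (e s)
      simpa using this
    simp [Equiv.trans_apply, h1, h2]

open Classical in
lemma perm_to_decode [Infinite I] (hQfin : Q.Finite) (hQL : ∀ x, x ∈ L ↔ x ∈ Q)
    (hb : Function.Injective b) (hbQ : ∀ s, b s ∉ Q)
    (ξ : Fin n → I) (η : Fin m → I) :
    ∃ π : Equiv.Perm I, (∀ a ∈ Q ∪ Set.range ξ, π a = a) ∧
      ∀ j, π (η j) = decode n m L b ξ (code n m Q L ξ η) j := by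
  classical
  set c := code n m Q L ξ η with hc
  set A : Set I := Q ∪ Set.range ξ with hA
  have hAfin : A.Finite := hQfin.union (Set.finite_range ξ)
  have hrep : ∀ r : Fin m, c r = n + (r : ℕ) → (¬ ∃ i, ξ i = η r) ∧ η r ∉ Q := by
    intro r hr
    by_cases h1 : ∃ i, ξ i = η r
    · exfalso
      obtain ⟨hlt, _⟩ := fi_mem h1
      have : c r = fi n ξ (η r) := by rw [hc]; unfold code; rw [if_pos h1]
      omega
    by_cases h2 : η r ∈ Q
    · exfalso
      have : c r = n + m + L.idxOf (η r) := by
        rw [hc]; unfold code; rw [if_neg h1, if_pos h2]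
      have hrm : (r : ℕ) < m := r.2
      omega
    exact ⟨h1, h2⟩
  have hnew : ∀ j : Fin m, (¬ ∃ i, ξ i = η j) → η j ∉ Q → c j = n + fo m η j := by
    intro j h1 h2; rw [hc]; unfold code; rw [if_neg h1, if_neg h2]
  set R : Finset (Fin m) := Finset.univ.filter (fun r => c r = n + (r : ℕ)) with hR
  have hmemR : ∀ r : Fin m, r ∈ R ↔ c r = n + (r : ℕ) := by intro r; simp [hR]
  have hfoR : ∀ r : Fin m, r ∈ R → fo m η r = (r : ℕ) := by
    intro r hr
    have h := (hmemR r).mp hr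
    obtain ⟨h1, h2⟩ := hrep r h
    have := hnew r h1 h2
    omega
  set v : {r // r ∈ R} → I := fun r => η r.1 with hv
  set w : {r // r ∈ R} → I := fun r => fresh n m b ξ (numNew n c r.1) with hw
  have hv_inj : Function.Injective v := by
    intro r r' h
    have h1 := hfoR r.1 r.2
    have h2 := hfoR r'.1 r'.2
    have h3 : fo m η r.1 = fo m η r'.1 := fo_congr h
    exact Subtype.ext (Fin.ext (by omega))
  have hw_inj : Function.Injective w := by
    intro r r' h
    by_contra hne
    have hne' : r.1 ≠ r'.1 := fun hh => hne (Subtype.ext hh)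
    have hnn : numNew n c r.1 ≠ numNew n c r'.1 := by
      rcases hne'.lt_or_gt with hlt | hlt
      · exact ne_of_lt (numNew_strictMono hlt ((hmemR _).mp r.2))
      · exact (ne_of_lt (numNew_strictMono hlt ((hmemR _).mp r'.2))).symm
    exact fresh_inj hb ξ hnn h
  have hvA : ∀ r, v r ∉ A := by
    intro r
    obtain ⟨h1, h2⟩ := hrep r.1 ((hmemR _).mp r.2)
    rintro (h | ⟨i, hi⟩)
    · exact h2 h
    · exact h1 ⟨i, hi⟩
  have hwA : ∀ r, w r ∉ A := by
    intro r
    rintro (h | h)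
    · exact hbQ _ h
    · exact fresh_not_mem_range hb ξ (numNew_lt c r.1) h
  obtain ⟨π, hπA, hπv⟩ := exists_perm A hAfin v w hv_inj hw_inj hvA hwA
  refine ⟨π, hπA, ?_⟩
  intro j
  by_cases h1 : ∃ i, ξ i = η j
  · obtain ⟨hlt, heq⟩ := fi_mem h1
    have hcj : c j = fi n ξ (η j) := by rw [hc]; unfold code; rw [if_pos h1]
    have hfix : π (η j) = η j := hπA _ (Or.inr ⟨⟨fi n ξ (η j), hlt⟩, heq⟩)
    rw [hfix]
    unfold decode
    rw [dif_pos (show c j < n by omega)]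
    have h4 : (⟨c j, by omega⟩ : Fin n) = ⟨fi n ξ (η j), hlt⟩ := Fin.ext hcj
    rw [h4, heq]
  by_cases h2 : η j ∈ Q
  · have hcj : c j = n + m + L.idxOf (η j) := by
      rw [hc]; unfold code; rw [if_neg h1, if_pos h2]
    have hfix : π (η j) = η j := hπA _ (Or.inl h2)
    have hidx : L.idxOf (η j) < L.length := List.idxOf_lt_length_iff.mpr ((hQL _).mpr h2)
    rw [hfix]
    unfold decode
    rw [dif_neg (show ¬ c j < n by omega), dif_neg (show ¬ c j < n + m by omega)]
    have harg : c j - n - m = L.idxOf (η j) := by omega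
    rw [harg, List.getD_eq_getElem L _ hidx, List.getElem_idxOf hidx]
  · have hcj : c j = n + fo m η j := hnew j h1 h2
    obtain ⟨hfo_lt, hfo_eq⟩ := fo_mem η j
    set r : Fin m := ⟨fo m η j, hfo_lt⟩ with hrdef
    have hrR : r ∈ R := by
      rw [hmemR]
      have h1' : ¬ ∃ i, ξ i = η r := by rw [hfo_eq]; exact h1
      have h2' : η r ∉ Q := by rw [hfo_eq]; exact h2
      have := hnew r h1' h2'
      rw [this, fo_congr hfo_eq]
    have hπr := hπv ⟨r, hrR⟩
    unfold decode
    rw [dif_neg (show ¬ c j < n by omega), dif_pos (show c j < n + m by omega)]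
    have harg : (⟨c j - n, by omega⟩ : Fin m) = r := Fin.ext (by simp [hrdef]; omega)
    rw [harg]
    calc π (η j) = π (η r) := by rw [hfo_eq]
      _ = fresh n m b ξ (numNew n c r) := hπr

end lemmas

def codes (n m : ℕ) (Q : Set I) (L : List I) (ρ : Set ((Fin n → I) × (Fin m → I)))
    (ξ : Fin n → I) : Set ℕ :=
  {N | ∃ η, (ξ, η) ∈ ρ ∧ Encodable.encode (code n m Q L ξ η) = N}

def cstar (n m : ℕ) (Q : Set I) (L : List I) (ρ : Set ((Fin n → I) × (Fin m → I)))
    (ξ : Fin n → I) : ℕ :=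
  sInf (codes n m Q L ρ ξ)

def sig (n m : ℕ) (Q : Set I) (L : List I) (b : ℕ → I)
    (ρ : Set ((Fin n → I) × (Fin m → I))) : Set ((Fin n → I) × (Fin m → I)) :=
  {p | p ∈ ρ ∧ Encodable.encode (code n m Q L p.1 p.2) = cstar n m Q L ρ p.1 ∧
    p.2 = decode n m L b p.1 (code n m Q L p.1 p.2)}

section sigma

variable {n m : ℕ} {Q : Set I} {L : List I} {b : ℕ → I}
  {ρ : Set ((Fin n → I) × (Fin m → I))}

lemma fix_symm (π : Equiv.Perm I) (S : Set I) (h : ∀ p ∈ S, π p = p) :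
    ∀ p ∈ S, π.symm p = p := by
  intro p hp
  nth_rewrite 1 [← h p hp]
  exact π.symm_apply_apply p

lemma codes_perm
    (hρ2 : ∀ π : Equiv.Perm I, (∀ p ∈ Q, π p = p) →
      ∀ ξ η, (ξ, η) ∈ ρ → (⇑π ∘ ξ, ⇑π ∘ η) ∈ ρ)
    (π : Equiv.Perm I) (hπ : ∀ p ∈ Q, π p = p) (ξ : Fin n → I) :
    codes n m Q L ρ (⇑π ∘ ξ) = codes n m Q L ρ ξ := by
  have hπs := fix_symm π Q hπ
  ext N
  constructor
  · rintro ⟨η', hη', hN⟩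
    have hcomp : ⇑π.symm ∘ ⇑π ∘ ξ = ξ := funext fun i => π.symm_apply_apply _
    have hcomp2 : ⇑π ∘ ⇑π.symm ∘ η' = η' := funext fun j => π.apply_symm_apply _
    refine ⟨⇑π.symm ∘ η', ?_, ?_⟩
    · have := hρ2 π.symm hπs _ _ hη'
      rwa [hcomp] at this
    · rw [← hN]
      congr 1
      have h5 := code_perm (L := L) π hπ ξ (⇑π.symm ∘ η')
      rw [hcomp2] at h5
      exact h5.symm
  · rintro ⟨η, hη, hN⟩
    exact ⟨⇑π ∘ η, hρ2 π hπ ξ η hη, by rw [code_perm (L := L) π hπ ξ η]; exact hN⟩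

lemma cstar_perm
    (hρ2 : ∀ π : Equiv.Perm I, (∀ p ∈ Q, π p = p) →
      ∀ ξ η, (ξ, η) ∈ ρ → (⇑π ∘ ξ, ⇑π ∘ η) ∈ ρ)
    (π : Equiv.Perm I) (hπ : ∀ p ∈ Q, π p = p) (ξ : Fin n → I) :
    cstar n m Q L ρ (⇑π ∘ ξ) = cstar n m Q L ρ ξ :=
  congrArg sInf (codes_perm hρ2 π hπ ξ)

lemma sig_perm (hb : Function.Injective b) (hQL : ∀ x, x ∈ L ↔ x ∈ Q) (hm : 0 < m)
    (hρ2 : ∀ π : Equiv.Perm I, (∀ p ∈ Q, π p = p) →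
      ∀ ξ η, (ξ, η) ∈ ρ → (⇑π ∘ ξ, ⇑π ∘ η) ∈ ρ)
    (π : Equiv.Perm I) (hπ : ∀ x ∈ Q ∪ b '' Set.Iio (n + m), π x = x)
    (p : (Fin n → I) × (Fin m → I)) (hp : p ∈ sig n m Q L b ρ) :
    (⇑π ∘ p.1, ⇑π ∘ p.2) ∈ sig n m Q L b ρ := by
  obtain ⟨hρp, hcp, hdp⟩ := hp
  have hπQ : ∀ x ∈ Q, π x = x := fun x hx => hπ x (Or.inl hx)
  have hcode := code_perm (L := L) π hπQ p.1 p.2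
  refine ⟨hρ2 π hπQ _ _ hρp, ?_, ?_⟩
  · rw [hcode, cstar_perm hρ2 π hπQ]
    exact hcp
  · rw [hcode, decode_perm hb hQL hm π hπ]
    exact congrArg (fun f => ⇑π ∘ f) hdp

end sigma

end

end AsserAux

/-- Asser's axiom of choice `AC^{n,m}` in the basic Fraenkel model of second
order: every total finitely supported relation between `n`-tuples and
`m`-tuples over an infinite set `I` contains a finitely supported subrelation
that is the graph of a function. -/
theorem asser_choice_in_basic_fraenkel_model {I : Type*} [Infinite I]
    (n m : ℕ) (hn : 1 ≤ n) (hm : 1 ≤ m)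
    (ρ : Set ((Fin n → I) × (Fin m → I))) (hρ : FinSuppRel ρ)
    (htotal : ∀ ξ : Fin n → I, ∃ η : Fin m → I, (ξ, η) ∈ ρ) :
    ∃ σ : Set ((Fin n → I) × (Fin m → I)), σ ⊆ ρ ∧ FinSuppRel σ ∧
      ∀ ξ : Fin n → I, ∃! η : Fin m → I, (ξ, η) ∈ σ := by
  classical
  obtain ⟨Q, hQfin, hQinv⟩ := hρ
  -- pointwise invariance of ρ
  have hρ2 : ∀ π : Equiv.Perm I, (∀ p ∈ Q, π p = p) →
      ∀ ξ η, (ξ, η) ∈ ρ → (⇑π ∘ ξ, ⇑π ∘ η) ∈ ρ := by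
    intro π hπ ξ η h
    rw [← hQinv π hπ]
    exact ⟨(ξ, η), h, rfl⟩
  -- an enumeration of Q
  set L : List I := hQfin.toFinset.toList with hLdef
  have hQL : ∀ x, x ∈ L ↔ x ∈ Q := by
    intro x
    rw [hLdef, Finset.mem_toList, Set.Finite.mem_toFinset]
  -- an enumeration of atoms outside Q
  have hQc : (Qᶜ : Set I).Infinite := hQfin.infinite_compl
  set b : ℕ → I := fun s => (hQc.natEmbedding _ s : I) with hbdef
  have hb : Function.Injective b := fun s s' h =>
    (hQc.natEmbedding _).injective (Subtype.ext h)
  have hbQ : ∀ s, b s ∉ Q := fun s => (hQc.natEmbedding _ s).2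
  refine ⟨AsserAux.sig n m Q L b ρ, fun p hp => hp.1, ?_, ?_⟩
  · -- finite support of σ
    refine ⟨Q ∪ b '' Set.Iio (n + m), hQfin.union ((Set.finite_Iio _).image b), ?_⟩
    intro π hπ
    ext p
    constructor
    · rintro ⟨q, hq, rfl⟩
      exact AsserAux.sig_perm hb hQL hm hρ2 π hπ q hq
    · intro hp
      refine ⟨(⇑π.symm ∘ p.1, ⇑π.symm ∘ p.2),
        AsserAux.sig_perm hb hQL hm hρ2 π.symm
          (AsserAux.fix_symm π _ hπ) p hp, ?_⟩
      refine Prod.ext ?_ ?_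
      · funext i; exact π.apply_symm_apply _
      · funext j; exact π.apply_symm_apply _
  · -- σ is the graph of a function
    intro ξ
    have hne : (AsserAux.codes n m Q L ρ ξ).Nonempty := by
      obtain ⟨η, hη⟩ := htotal ξ
      exact ⟨_, η, hη, rfl⟩
    obtain ⟨η₀, hη₀ρ, hη₀c⟩ := Nat.sInf_mem hne
    obtain ⟨π, hπA, hπd⟩ := AsserAux.perm_to_decode hQfin hQL hb hbQ ξ η₀
    set η1 : Fin m → I := ⇑π ∘ η₀ with hη1
    have hπξ : ⇑π ∘ ξ = ξ := funext fun i => hπA _ (Or.inr ⟨i, rfl⟩)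
    have hπQ : ∀ x ∈ Q, π x = x := fun x hx => hπA x (Or.inl hx)
    have hρ1 : (ξ, η1) ∈ ρ := by
      have := hρ2 π hπQ ξ η₀ hη₀ρ
      rwa [hπξ] at this
    have hcode1 : AsserAux.code n m Q L ξ η1 = AsserAux.code n m Q L ξ η₀ := by
      have := AsserAux.code_perm (L := L) π hπQ ξ η₀
      rwa [hπξ] at this
    have hd : η1 = AsserAux.decode n m L b ξ (AsserAux.code n m Q L ξ η₀) := funext hπd
    have hmem1 : (ξ, η1) ∈ AsserAux.sig n m Q L b ρ := by
      refine ⟨hρ1, ?_, ?_⟩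
      · show Encodable.encode (AsserAux.code n m Q L ξ η1) = _
        rw [hcode1]
        exact hη₀c
      · show η1 = AsserAux.decode n m L b ξ (AsserAux.code n m Q L ξ η1)
        rw [hcode1]
        exact hd
    refine ⟨η1, hmem1, ?_⟩
    intro η' hη'
    obtain ⟨h'ρ, h'c, h'd⟩ := hη'
    have h'c' : Encodable.encode (AsserAux.code n m Q L ξ η')
        = AsserAux.cstar n m Q L ρ ξ := h'c
    have h'd' : η' = AsserAux.decode n m L b ξ (AsserAux.code n m Q L ξ η') := h'd
    have hc1 : Encodable.encode (AsserAux.code n m Q L ξ η1)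
        = AsserAux.cstar n m Q L ρ ξ := hmem1.2.1
    have hd1 : η1 = AsserAux.decode n m L b ξ (AsserAux.code n m Q L ξ η1) := hmem1.2.2
    have e1 : Encodable.encode (AsserAux.code n m Q L ξ η')
        = Encodable.encode (AsserAux.code n m Q L ξ η1) := by
      rw [h'c', hc1]
    have e2 : AsserAux.code n m Q L ξ η' = AsserAux.code n m Q L ξ η1 :=
      Encodable.encode_injective e1
    rw [h'd', e2, ← hd1]
end

section
/- Let I be a set, n, m ≥ 1, let α ⊆ (Fin n → I) be finite, and for each ξ ∈ α let δ_ξ ⊆ (Fin m → I) be a finitely supported set. Then σ = {(ξ, η) | ξ ∈ α and η ∈ δ_ξ} is a finitely supported subset of (Fin n → I) × (Fin m → I) with respect to the diagonal action, and for each ξ ∈ α its slice {η | (ξ, η) ∈ σ} equals δ_ξ. -/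
/-- The Ackermann choice axiom restricted to a finite predicate `α`: if `α` is
a finite set of `n`-tuples and each `ξ ∈ α` is assigned a finitely supported
set `δ_ξ` of `m`-tuples, then `σ = {(ξ, η) | ξ ∈ α ∧ η ∈ δ_ξ}` is a finitely
supported relation whose slice at each `ξ ∈ α` is `δ_ξ`. -/
theorem finite_family_choice_relation {I : Type*} (n m : ℕ)
    (hn : 1 ≤ n) (hm : 1 ≤ m) (α : Set (Fin n → I)) (hα : α.Finite)
    (δ : (Fin n → I) → Set (Fin m → I))
    (hδ : ∀ ξ ∈ α, FinSuppSet (δ ξ)) :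
    FinSuppRel {q : (Fin n → I) × (Fin m → I) | q.1 ∈ α ∧ q.2 ∈ δ q.1} ∧
    ∀ ξ ∈ α, {η : Fin m → I |
      (ξ, η) ∈ {q : (Fin n → I) × (Fin m → I) | q.1 ∈ α ∧ q.2 ∈ δ q.1}} = δ ξ := by
  classical
  constructor
  · choose Qf hQfin hQinv using hδ
    set g : (Fin n → I) → Set I := fun ξ =>
      if h : ξ ∈ α then Qf ξ h else ∅ with hg
    refine ⟨⋃ ξ ∈ α, (Set.range ξ ∪ g ξ), ?_, ?_⟩
    · refine hα.biUnion fun ξ hξ => (Set.finite_range ξ).union ?_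
      simp only [hg, dif_pos hξ]
      exact hQfin ξ hξ
    · intro π hπ
      -- facts: for ξ ∈ α, π fixes range ξ and g ξ
      have hfix : ∀ ξ ∈ α, ∀ x ∈ Set.range ξ ∪ g ξ, π x = x := by
        intro ξ hξ x hx
        exact hπ x (Set.mem_biUnion hξ hx)
      have hcomp : ∀ ξ ∈ α, ⇑π ∘ ξ = ξ := by
        intro ξ hξ
        funext i
        exact hfix ξ hξ (ξ i) (Or.inl ⟨i, rfl⟩)
      have hδinv : ∀ ξ (hξ : ξ ∈ α), (fun η => ⇑π ∘ η) '' δ ξ = δ ξ := by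
        intro ξ hξ
        refine hQinv ξ hξ π fun p hp => hfix ξ hξ p (Or.inr ?_)
        simp only [hg, dif_pos hξ]; exact hp
      have hcomp' : ∀ ξ ∈ α, ⇑π⁻¹ ∘ ξ = ξ := by
        intro ξ hξ
        funext i
        have := hfix ξ hξ (ξ i) (Or.inl ⟨i, rfl⟩)
        simp only [Function.comp_apply]
        exact (Equiv.symm_apply_eq π).2 this.symm
      ext q
      constructor
      · rintro ⟨⟨ξ, η⟩, ⟨hξ, hη⟩, rfl⟩
        refine ⟨?_, ?_⟩
        · simpa [hcomp ξ hξ] using hξ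
        · have : ⇑π ∘ η ∈ (fun η => ⇑π ∘ η) '' δ ξ := ⟨η, hη, rfl⟩
          rw [hδinv ξ hξ] at this
          simpa [hcomp ξ hξ] using this
      · rintro ⟨hξ, hη⟩
        obtain ⟨ξ, η⟩ := q
        refine ⟨(ξ, ⇑π⁻¹ ∘ η), ⟨hξ, ?_⟩, ?_⟩
        · have : η ∈ (fun η => ⇑π ∘ η) '' δ ξ := by rw [hδinv ξ hξ]; exact hη
          obtain ⟨η', hη', hη'eq⟩ := this
          have : ⇑π⁻¹ ∘ η = η' := by
            funext i; simp [← hη'eq]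
          rw [this]; exact hη'
        · simp only [Prod.mk.injEq]
          refine ⟨hcomp ξ hξ, ?_⟩
          funext i; simp
  · intro ξ hξ
    ext η
    simp [hξ]
end
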